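/- arXiv:2101.09677 — 9 statements merged into one kernel-verified Lean document; each statement's English description precedes it below -/
import Mathlib

section
/- Let (Γ,ψ) be a G-gain graph and let s be a central involution of G. Then ψ is switching equivalent to the constant gain function 𝐬 if and only if ψ(W) = s^{|W|} for every closed walk W in Γ. -/
open SimpleGraph

/-- `ψ` is a gain function on `Γ`: on adjacent ordered pairs, reversing the
orientation inverts the gain. -/
def IsGainFun {V G : Type} [Group G] (Γ : SimpleGraph V) (ψ : V → V → G) : Prop :=
  ∀ ⦃u v : V⦄, Γ.Adj u v → ψ v u = (ψ u v)⁻¹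

/-- Two gain functions on `Γ` are switching equivalent. -/
def SwitchingEquiv {V G : Type} [Group G] (Γ : SimpleGraph V) (ψ₁ ψ₂ : V → V → G) : Prop :=
  ∃ f : V → G, ∀ ⦃u v : V⦄, Γ.Adj u v → ψ₂ u v = (f u)⁻¹ * ψ₁ u v * f v

/-- A `G`-phase of `Γ`: a choice of a group element for every incident
(vertex, edge) pair (the non-incident entries of the phase matrix are `0`,
so they carry no data). -/
def GPhase {V : Type} (Γ : SimpleGraph V) (G : Type) : Type :=
  ∀ (v : V) (e : Γ.edgeSet), v ∈ (e : Sym2 V) → G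

/-- `Ψ(H) = ψ`: the gain function associated with the phase `H` (with parameter `s₁`)
is `ψ`, i.e. `ψ(u,v) = s₁ · H(u,e) · H(v,e)⁻¹` for `e = {u,v}`. -/
def PsiEq {V G : Type} [Group G] {Γ : SimpleGraph V} (s₁ : G) (H : GPhase Γ G)
    (ψ : V → V → G) : Prop :=
  ∀ ⦃u v : V⦄ (h : Γ.Adj u v),
    ψ u v = s₁ * H u ⟨s(u, v), h⟩ (Sym2.mem_mk_left u v)
      * (H v ⟨s(u, v), h⟩ (Sym2.mem_mk_right u v))⁻¹

/-- `Ψ_L(H) = ζ`: the gain function on the line graph associated with the phase `H`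
(with parameter `s`) is `ζ`, i.e. `ζ(e_p,e_q) = s · H(w,e_p)⁻¹ · H(w,e_q)` whenever
`w` is a common endpoint of the distinct edges `e_p, e_q`. -/
def PsiLEq {V G : Type} [Group G] {Γ : SimpleGraph V} (s : G) (H : GPhase Γ G)
    (ζ : Γ.edgeSet → Γ.edgeSet → G) : Prop :=
  ∀ (p q : Γ.edgeSet) (w : V) (hp : w ∈ (p : Sym2 V)) (hq : w ∈ (q : Sym2 V)), p ≠ q →
    ζ p q = s * (H w p hp)⁻¹ * H w q hq

/-- `(L, ζ)` is a gain-line graph (with parameter `s`): there are a graph `Γ`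
with `L = L(Γ)` (up to isomorphism) and a `G`-phase `H` of `Γ` with `Ψ_L(H) = ζ`. -/
def IsGainLine {VL G : Type} [Group G] (s : G) (L : SimpleGraph VL) (ζ : VL → VL → G) : Prop :=
  ∃ (V' : Type) (Γ : SimpleGraph V') (φ : L ≃g Γ.lineGraph) (H : GPhase Γ G),
    PsiLEq s H fun p q => ζ (φ.symm p) (φ.symm q)
/-- The gain of a walk: the ordered product of the gains of its darts. -/
def walkGain {V G : Type} [Group G] {Γ : SimpleGraph V} (ψ : V → V → G) {u v : V}
    (W : Γ.Walk u v) : G :=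
  (W.darts.map fun d => ψ d.fst d.snd).prod


section Aux

variable {V G : Type} [Group G] {Γ : SimpleGraph V}

lemma walkGain_cons (ψ : V → V → G) {u v w : V} (h : Γ.Adj u v) (p : Γ.Walk v w) :
    walkGain ψ (SimpleGraph.Walk.cons h p) = ψ u v * walkGain ψ p := by
  simp [walkGain]

lemma walkGain_append (ψ : V → V → G) {u v w : V} (p : Γ.Walk u v) (q : Γ.Walk v w) :
    walkGain ψ (p.append q) = walkGain ψ p * walkGain ψ q := by
  simp [walkGain, SimpleGraph.Walk.darts_append]

lemma walkGain_copy (ψ : V → V → G) {u v u' v' : V} (p : Γ.Walk u v)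
    (hu : u = u') (hv : v = v') :
    walkGain ψ (p.copy hu hv) = walkGain ψ p := by
  subst hu hv; rfl

lemma walkGain_reverse (ψ : V → V → G) (hψ : IsGainFun Γ ψ) {u v : V} (p : Γ.Walk u v) :
    walkGain ψ p.reverse = (walkGain ψ p)⁻¹ := by
  induction p with
  | nil => simp [walkGain]
  | cons h p ih =>
      rw [SimpleGraph.Walk.reverse_cons, walkGain_append, ih, walkGain_cons, walkGain_cons,
        hψ h]
      simp [walkGain, mul_assoc]

end Aux

/-- **Lemma 2.6.** Let `(Γ, ψ)` be a `G`-gain graph and let `s` be a central involution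
of `G`. Then `ψ ∼ 𝐬` if and only if `ψ(W) = s ^ |W|` for every closed walk `W`. -/
theorem switchingEquiv_const_iff_forall_closedWalk
    {V G : Type} [Group G] [Fintype V] (Γ : SimpleGraph V) (hE : Γ.edgeSet.Nonempty)
    (ψ : V → V → G) (hψ : IsGainFun Γ ψ)
    (s : G) (hs : s * s = 1) (hsc : ∀ g : G, s * g = g * s) :
    SwitchingEquiv Γ ψ (fun _ _ => s) ↔
      ∀ (v : V) (W : Γ.Walk v v), walkGain ψ W = s ^ W.length := by
  have hcomm : ∀ (n : ℕ) (g : G), s ^ n * g = g * s ^ n := fun n g =>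
    ((show Commute s g from hsc g).pow_left n).eq
  have hs2 : ∀ n : ℕ, s ^ (2 * n) = 1 := by
    intro n
    rw [pow_mul, pow_two, hs, one_pow]
  constructor
  · rintro ⟨f, hf⟩ v W
    have key : ∀ (a b : V) (W : Γ.Walk a b),
        walkGain ψ W = f a * s ^ W.length * (f b)⁻¹ := by
      intro a b W
      induction W with
      | nil => simp [walkGain]
      | cons h p ih =>
          rename_i x y z
          have h1 := hf h
          simp only at h1
          have hψab : ψ x y = f x * s * (f y)⁻¹ := by rw [h1]; group
          rw [walkGain_cons, ih, hψab, SimpleGraph.Walk.length_cons, pow_succ]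
          rw [hcomm p.length s]
          group
    rw [key v v W]
    rw [← hcomm W.length (f v)]
    group
  · intro h
    classical
    set root : V → V := fun v => (Γ.connectedComponentMk v).out with hroot
    have hreach : ∀ v : V, Γ.Reachable (root v) v := fun v =>
      SimpleGraph.ConnectedComponent.exact ((Γ.connectedComponentMk v).out_eq)
    set P : ∀ v : V, Γ.Walk (root v) v := fun v => (hreach v).some with hP
    refine ⟨fun v => (walkGain ψ (P v))⁻¹ * s ^ (P v).length, ?_⟩
    intro u v huv
    have hre : root v = root u := by
      simp only [hroot]
      congr 1
      exact (SimpleGraph.ConnectedComponent.sound huv.reachable).symm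
    -- closed walk at root u : P u ++ (u,v) ++ reverse (P v)
    set W : Γ.Walk (root u) (root u) :=
      (P u).append (SimpleGraph.Walk.cons huv (((P v).reverse).copy rfl hre)) with hW
    have hgain := h (root u) W
    have hlen : W.length = (P u).length + ((P v).length + 1) := by
      simp [hW, SimpleGraph.Walk.length_append, SimpleGraph.Walk.length_cons]
    have hgain' : walkGain ψ (P u) * (ψ u v * (walkGain ψ (P v))⁻¹)
        = s ^ ((P u).length + ((P v).length + 1)) := by
      rw [← hlen, ← hgain, hW, walkGain_append, walkGain_cons, walkGain_copy,
        walkGain_reverse ψ hψ]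
    have hψuv : ψ u v = (walkGain ψ (P u))⁻¹
        * s ^ ((P u).length + ((P v).length + 1)) * walkGain ψ (P v) := by
      rw [← hgain']; group
    refine Eq.symm ?_
    rw [hψuv]
    set a := walkGain ψ (P u)
    set b := walkGain ψ (P v)
    set m := (P u).length
    set n := (P v).length
    show (a⁻¹ * s ^ m)⁻¹ * (a⁻¹ * s ^ (m + (n + 1)) * b) * (b⁻¹ * s ^ n) = s
    rw [mul_inv_rev, inv_inv]
    simp only [mul_assoc, mul_inv_cancel_left, inv_mul_cancel_left]
    rw [← pow_add, show m + (n + 1) + n = m + (2 * n + 1) by ring, pow_add,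
      inv_mul_cancel_left, pow_succ, hs2, one_mul]
end

section
/- Let n ≥ 3, let s be a central involution of a group G, and let ψ be a gain function on the complete graph K_n such that for every three distinct vertices v₀, v₁, v₂ one has ψ(v₀,v₁)ψ(v₁,v₂)ψ(v₂,v₀) = s. Then ψ is switching equivalent to the constant gain function 𝐬. -/
open SimpleGraph

/-- **Lemma 2.8.** If every triangle of a gain function `ψ` on the complete graph `K_n`
(`n ≥ 3`) has gain `s` (a central involution), then `ψ ∼ 𝐬`. -/
theorem switchingEquiv_const_of_forall_triangle
    {G : Type} [Group G] (n : ℕ) (hn : 3 ≤ n)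
    (s : G) (hs : s * s = 1) (hsc : ∀ g : G, s * g = g * s)
    (ψ : Fin n → Fin n → G) (hψ : IsGainFun (⊤ : SimpleGraph (Fin n)) ψ)
    (htri : ∀ v₀ v₁ v₂ : Fin n, v₀ ≠ v₁ → v₁ ≠ v₂ → v₀ ≠ v₂ →
      ψ v₀ v₁ * ψ v₁ v₂ * ψ v₂ v₀ = s) :
    SwitchingEquiv (⊤ : SimpleGraph (Fin n)) ψ (fun _ _ => s) := by
  have hss : s⁻¹ = s := by
    rw [inv_eq_iff_mul_eq_one, hs]
  set z : Fin n := ⟨0, by omega⟩ with hz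
  refine ⟨fun v => if v = z then s else (ψ z v)⁻¹, ?_⟩
  intro u v huv
  dsimp only
  have huv' : u ≠ v := (SimpleGraph.top_adj u v).mp huv
  by_cases hu : u = z
  · subst hu
    rw [if_pos rfl, if_neg (Ne.symm huv'), hss, mul_inv_cancel_right]
  · by_cases hv : v = z
    · subst hv
      have h1 : ψ u z = (ψ z u)⁻¹ := hψ ((SimpleGraph.top_adj z u).mpr (Ne.symm hu))
      rw [if_pos rfl, if_neg hu, h1, inv_inv]
      group
    · have h1 : ψ v z = (ψ z v)⁻¹ := hψ ((SimpleGraph.top_adj z v).mpr (Ne.symm hv))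
      have h2 := htri z u v (Ne.symm hu) huv' (Ne.symm hv)
      rw [if_neg hu, if_neg hv, inv_inv, ← h1]
      rw [mul_assoc] at h2 ⊢
      exact h2.symm
end

section
/- Let Γ be a finite connected simple graph with at least one edge, and let H₁, H₂ be G-phases of Γ. Then Ψ(H₁) is switching equivalent to Ψ(H₂) in G(Γ) if and only if Ψ_L(H₁) is switching equivalent to Ψ_L(H₂) in G(L(Γ)). Consequently there is a well-defined injective map ℒ from switching equivalence classes of gain functions on Γ to switching equivalence classes of gain functions on L(Γ), given by ℒ([Ψ(H)]) = [Ψ_L(H)]. -/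
open SimpleGraph

section
open scoped Classical

/-- The gain function `Ψ(H)` on `Γ` associated with the phase `H` (parameter `s₁`). -/
noncomputable def PsiFun {V G : Type} [Group G] (Γ : SimpleGraph V) (s₁ : G)
    (H : GPhase Γ G) : V → V → G := fun u v =>
  if h : Γ.Adj u v then
    s₁ * H u ⟨s(u, v), h⟩ (Sym2.mem_mk_left u v)
      * (H v ⟨s(u, v), h⟩ (Sym2.mem_mk_right u v))⁻¹
  else 1

/-- The gain function `Ψ_L(H)` on `L(Γ)` associated with the phase `H` (parameter `s₂`). -/
noncomputable def PsiLFun {V G : Type} [Group G] (Γ : SimpleGraph V) (s₂ : G)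
    (H : GPhase Γ G) : Γ.edgeSet → Γ.edgeSet → G := fun p q =>
  if h : p ≠ q ∧ ∃ w, w ∈ (p : Sym2 V) ∧ w ∈ (q : Sym2 V) then
    s₂ * (H h.2.choose p h.2.choose_spec.1)⁻¹ * H h.2.choose q h.2.choose_spec.2
  else 1

/-- Switching equivalence as a setoid on functions `V → V → G`. -/
def switchSetoid {V : Type} (G : Type) [Group G] (Γ : SimpleGraph V) :
    Setoid (V → V → G) where
  r := SwitchingEquiv Γ
  iseqv := by
    constructor
    · intro ψ
      exact ⟨fun _ => 1, by intro u v _; simp⟩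
    · rintro ψ₁ ψ₂ ⟨f, hf⟩
      exact ⟨fun v => (f v)⁻¹, by intro u v h; rw [hf h]; group⟩
    · rintro ψ₁ ψ₂ ψ₃ ⟨f, hf⟩ ⟨g, hg⟩
      exact ⟨fun v => f v * g v, by intro u v h; rw [hg h, hf h]; group⟩

lemma psiFun_eq {V G : Type} [Group G] {Γ : SimpleGraph V} (s₁ : G) (H : GPhase Γ G)
    {u v : V} (h : Γ.Adj u v) :
    PsiFun Γ s₁ H u v = s₁ * H u ⟨s(u, v), h⟩ (Sym2.mem_mk_left u v)
      * (H v ⟨s(u, v), h⟩ (Sym2.mem_mk_right u v))⁻¹ :=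
  dif_pos h

lemma common_unique {V : Type} {Γ : SimpleGraph V} {p q : Γ.edgeSet} (hne : p ≠ q)
    {x w : V} (hx1 : x ∈ (p : Sym2 V)) (hx2 : x ∈ (q : Sym2 V))
    (hw1 : w ∈ (p : Sym2 V)) (hw2 : w ∈ (q : Sym2 V)) : x = w := by
  by_contra hxw
  exact hne (Subtype.ext (Sym2.eq_of_ne_mem hxw hx1 hw1 hx2 hw2))

lemma psiLFun_eq {V G : Type} [Group G] {Γ : SimpleGraph V} (s₂ : G) (H : GPhase Γ G)
    {p q : Γ.edgeSet} (hne : p ≠ q) {w : V} (hp : w ∈ (p : Sym2 V)) (hq : w ∈ (q : Sym2 V)) :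
    PsiLFun Γ s₂ H p q = s₂ * (H w p hp)⁻¹ * H w q hq := by
  have hcond : p ≠ q ∧ ∃ w, w ∈ (p : Sym2 V) ∧ w ∈ (q : Sym2 V) := ⟨hne, w, hp, hq⟩
  have key : ∀ (x : V) (hx1 : x ∈ (p : Sym2 V)) (hx2 : x ∈ (q : Sym2 V)),
      s₂ * (H x p hx1)⁻¹ * H x q hx2 = s₂ * (H w p hp)⁻¹ * H w q hq := by
    intro x hx1 hx2
    obtain rfl : x = w := common_unique hne hx1 hx2 hp hq
    rfl
  show dite _ _ _ = _
  rw [dif_pos hcond]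
  exact key _ _ _

lemma exists_adj_of_conn {V : Type} {Γ : SimpleGraph V} (hconn : Γ.Connected)
    (hE : Γ.edgeSet.Nonempty) (v : V) : ∃ u, Γ.Adj v u := by
  obtain ⟨e, he⟩ := hE
  induction e with
  | _ a b =>
    have hab : Γ.Adj a b := he
    obtain ⟨w⟩ := hconn.preconnected v a
    cases w with
    | nil => exact ⟨b, hab⟩
    | cons h _ => exact ⟨_, h⟩

/-- Forward direction of the crucial equivalence. -/
lemma switching_forward {V G : Type} [Group G] {Γ : SimpleGraph V}
    (s₁ s₂ : G) (hsc₁ : ∀ g : G, s₁ * g = g * s₁) (hsc₂ : ∀ g : G, s₂ * g = g * s₂)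
    (H₁ H₂ : GPhase Γ G)
    (h : SwitchingEquiv Γ (PsiFun Γ s₁ H₁) (PsiFun Γ s₁ H₂)) :
    SwitchingEquiv Γ.lineGraph (PsiLFun Γ s₂ H₁) (PsiLFun Γ s₂ H₂) := by
  obtain ⟨f, hf⟩ := h
  have mv₁ : ∀ x y : G, x * (s₁ * y) = s₁ * (x * y) := fun x y => by
    rw [← mul_assoc, ← hsc₁, mul_assoc]
  have mv₂ : ∀ x y : G, x * (s₂ * y) = s₂ * (x * y) := fun x y => by
    rw [← mul_assoc, ← hsc₂, mul_assoc]
  -- well-definedness of the edge switching function on endpoints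
  have gwd : ∀ (e : Γ.edgeSet) (u v : V) (hu : u ∈ (e : Sym2 V)) (hv : v ∈ (e : Sym2 V)),
      (H₁ u e hu)⁻¹ * f u * H₂ u e hu = (H₁ v e hv)⁻¹ * f v * H₂ v e hv := by
    rintro ⟨e, he⟩ u v hu hv
    by_cases huv : u = v
    · subst huv; rfl
    · obtain rfl : e = s(u, v) := (Sym2.mem_and_mem_iff huv).mp ⟨hu, hv⟩
      have hadj : Γ.Adj u v := he
      have h := hf hadj
      rw [psiFun_eq s₁ H₁ hadj, psiFun_eq s₁ H₂ hadj] at h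
      simp only [mul_assoc, mv₁] at h
      replace h := mul_left_cancel h
      rw [mul_inv_eq_iff_eq_mul] at h
      show (H₁ u ⟨s(u, v), hadj⟩ (Sym2.mem_mk_left u v))⁻¹ * f u
            * H₂ u ⟨s(u, v), hadj⟩ (Sym2.mem_mk_left u v)
          = (H₁ v ⟨s(u, v), hadj⟩ (Sym2.mem_mk_right u v))⁻¹ * f v
            * H₂ v ⟨s(u, v), hadj⟩ (Sym2.mem_mk_right u v)
      rw [h]; group
  classical
  refine ⟨fun e => (H₁ ((e : Sym2 V).out.1) e (Sym2.out_fst_mem _))⁻¹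
      * f ((e : Sym2 V).out.1) * H₂ ((e : Sym2 V).out.1) e (Sym2.out_fst_mem _), ?_⟩
  rintro p q ⟨hne, hcom⟩
  obtain ⟨w, hp, hq⟩ : ∃ w, w ∈ (p : Sym2 V) ∧ w ∈ (q : Sym2 V) := hcom
  beta_reduce
  rw [psiLFun_eq s₂ H₁ hne hp hq, psiLFun_eq s₂ H₂ hne hp hq,
    gwd p _ w (Sym2.out_fst_mem _) hp, gwd q _ w (Sym2.out_fst_mem _) hq]
  simp only [mul_inv_rev, inv_inv, mul_assoc, mv₂]
  congr 1
  group

/-- Backward direction of the crucial equivalence. -/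
lemma switching_backward {V G : Type} [Group G] {Γ : SimpleGraph V}
    (hconn : Γ.Connected) (hE : Γ.edgeSet.Nonempty)
    (s₁ s₂ : G) (hsc₁ : ∀ g : G, s₁ * g = g * s₁) (hsc₂ : ∀ g : G, s₂ * g = g * s₂)
    (H₁ H₂ : GPhase Γ G)
    (h : SwitchingEquiv Γ.lineGraph (PsiLFun Γ s₂ H₁) (PsiLFun Γ s₂ H₂)) :
    SwitchingEquiv Γ (PsiFun Γ s₁ H₁) (PsiFun Γ s₁ H₂) := by
  obtain ⟨g, hg⟩ := h
  have mv₁ : ∀ x y : G, x * (s₁ * y) = s₁ * (x * y) := fun x y => by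
    rw [← mul_assoc, ← hsc₁, mul_assoc]
  have mv₂ : ∀ x y : G, x * (s₂ * y) = s₂ * (x * y) := fun x y => by
    rw [← mul_assoc, ← hsc₂, mul_assoc]
  -- well-definedness of the vertex switching function on incident edges
  have fwd : ∀ (v : V) (p q : Γ.edgeSet) (hp : v ∈ (p : Sym2 V)) (hq : v ∈ (q : Sym2 V)),
      H₁ v p hp * g p * (H₂ v p hp)⁻¹ = H₁ v q hq * g q * (H₂ v q hq)⁻¹ := by
    intro v p q hp hq
    by_cases hpq : p = q
    · subst hpq; rfl
    · have hadj : Γ.lineGraph.Adj p q := ⟨hpq, v, hp, hq⟩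
      have h := hg hadj
      rw [psiLFun_eq s₂ H₁ hpq hp hq, psiLFun_eq s₂ H₂ hpq hp hq] at h
      simp only [mul_assoc, mv₂] at h
      replace h := mul_left_cancel h
      rw [inv_mul_eq_iff_eq_mul] at h
      rw [h]; group
  classical
  choose nb hnb using exists_adj_of_conn hconn hE
  refine ⟨fun v => H₁ v ⟨s(v, nb v), hnb v⟩ (Sym2.mem_mk_left _ _)
      * g ⟨s(v, nb v), hnb v⟩
      * (H₂ v ⟨s(v, nb v), hnb v⟩ (Sym2.mem_mk_left _ _))⁻¹, ?_⟩
  intro u v hadj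
  beta_reduce
  rw [psiFun_eq s₁ H₁ hadj, psiFun_eq s₁ H₂ hadj,
    fwd u _ ⟨s(u, v), hadj⟩ (Sym2.mem_mk_left _ _) (Sym2.mem_mk_left u v),
    fwd v _ ⟨s(u, v), hadj⟩ (Sym2.mem_mk_left _ _) (Sym2.mem_mk_right u v)]
  simp only [mul_inv_rev, inv_inv, mul_assoc, mv₁]
  congr 1
  group

/-- **Theorem 2.9 (Theorem 4.25/Corollary 4.26 of [CDD]).** For phases `H₁, H₂` of a
finite connected graph `Γ`, `Ψ(H₁) ∼ Ψ(H₂)` iff `Ψ_L(H₁) ∼ Ψ_L(H₂)`; consequently the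
map `ℒ([Ψ(H)]) = [Ψ_L(H)]` between switching classes is well defined and injective. -/
theorem switchingEquiv_psi_iff_switchingEquiv_psiL
    {V G : Type} [Group G] [Fintype V] (Γ : SimpleGraph V) (hconn : Γ.Connected)
    (hE : Γ.edgeSet.Nonempty)
    (s₁ s₂ : G) (hs₁ : s₁ * s₁ = 1) (hsc₁ : ∀ g : G, s₁ * g = g * s₁)
    (hs₂ : s₂ * s₂ = 1) (hsc₂ : ∀ g : G, s₂ * g = g * s₂) :
    (∀ H₁ H₂ : GPhase Γ G,
      (SwitchingEquiv Γ (PsiFun Γ s₁ H₁) (PsiFun Γ s₁ H₂) ↔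
        SwitchingEquiv Γ.lineGraph (PsiLFun Γ s₂ H₁) (PsiLFun Γ s₂ H₂))) ∧
    ∃ ℒ : Quotient (switchSetoid G Γ) → Quotient (switchSetoid G Γ.lineGraph),
      (∀ H : GPhase Γ G,
        ℒ (Quotient.mk (switchSetoid G Γ) (PsiFun Γ s₁ H)) =
          Quotient.mk (switchSetoid G Γ.lineGraph) (PsiLFun Γ s₂ H)) ∧
      ∀ H₁ H₂ : GPhase Γ G,
        ℒ (Quotient.mk (switchSetoid G Γ) (PsiFun Γ s₁ H₁)) =
            ℒ (Quotient.mk (switchSetoid G Γ) (PsiFun Γ s₁ H₂)) →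
          Quotient.mk (switchSetoid G Γ) (PsiFun Γ s₁ H₁) =
            Quotient.mk (switchSetoid G Γ) (PsiFun Γ s₁ H₂) := by
  have hiff : ∀ H₁ H₂ : GPhase Γ G,
      SwitchingEquiv Γ (PsiFun Γ s₁ H₁) (PsiFun Γ s₁ H₂) ↔
        SwitchingEquiv Γ.lineGraph (PsiLFun Γ s₂ H₁) (PsiLFun Γ s₂ H₂) := fun H₁ H₂ =>
    ⟨switching_forward s₁ s₂ hsc₁ hsc₂ H₁ H₂,
     switching_backward hconn hE s₁ s₂ hsc₁ hsc₂ H₁ H₂⟩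
  refine ⟨hiff, ?_⟩
  classical
  refine ⟨fun c =>
    if h : ∃ H : GPhase Γ G, c = Quotient.mk (switchSetoid G Γ) (PsiFun Γ s₁ H) then
      Quotient.mk (switchSetoid G Γ.lineGraph) (PsiLFun Γ s₂ h.choose)
    else Quotient.mk (switchSetoid G Γ.lineGraph) (fun _ _ => 1), ?_, ?_⟩
  · intro H
    have hex : ∃ H' : GPhase Γ G,
        Quotient.mk (switchSetoid G Γ) (PsiFun Γ s₁ H) =
          Quotient.mk (switchSetoid G Γ) (PsiFun Γ s₁ H') := ⟨H, rfl⟩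
    beta_reduce
    rw [dif_pos hex]
    have h1 : SwitchingEquiv Γ (PsiFun Γ s₁ hex.choose) (PsiFun Γ s₁ H) :=
      Quotient.exact hex.choose_spec.symm
    exact Quotient.sound ((hiff _ _).mp h1)
  · intro H₁ H₂ hL
    have hex₁ : ∃ H' : GPhase Γ G,
        Quotient.mk (switchSetoid G Γ) (PsiFun Γ s₁ H₁) =
          Quotient.mk (switchSetoid G Γ) (PsiFun Γ s₁ H') := ⟨H₁, rfl⟩
    have hex₂ : ∃ H' : GPhase Γ G,
        Quotient.mk (switchSetoid G Γ) (PsiFun Γ s₁ H₂) =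
          Quotient.mk (switchSetoid G Γ) (PsiFun Γ s₁ H') := ⟨H₂, rfl⟩
    beta_reduce at hL
    rw [dif_pos hex₁, dif_pos hex₂] at hL
    have heq₁ : SwitchingEquiv Γ (PsiFun Γ s₁ H₁) (PsiFun Γ s₁ hex₁.choose) :=
      Quotient.exact hex₁.choose_spec
    have heq₂ : SwitchingEquiv Γ (PsiFun Γ s₁ hex₂.choose) (PsiFun Γ s₁ H₂) :=
      Quotient.exact hex₂.choose_spec.symm
    have hmid : SwitchingEquiv Γ.lineGraph (PsiLFun Γ s₂ hex₁.choose)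
        (PsiLFun Γ s₂ hex₂.choose) := Quotient.exact hL
    refine Quotient.sound ?_
    exact (switchSetoid G Γ).trans heq₁
      ((switchSetoid G Γ).trans ((hiff _ _).mpr hmid) heq₂)

end
end

section
/- For every gain graph (Γ,ψ) there exists a G-phase H of Γ with Ψ(H) = ψ (i.e., the map Ψ : ℋ_Γ → G(Γ) is surjective). In particular, every gain graph (Γ,ψ) admits a line graph: there exists ζ ∈ G(L(Γ)), namely ζ = Ψ_L(H), such that (L(Γ),ζ) is a line graph of (Γ,ψ). -/
open SimpleGraph

/-!
Orient each edge arbitrarily and give its tail the phase `s₁ * ψ(tail, head)` and its head the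
phase `1`. Along the orientation `Ψ(H) = s₁² ψ = ψ`; against it, centrality of `s₁` and
`ψ(v, u) = ψ(u, v)⁻¹` give the same. Every phase then induces a gain function on the line graph,
because two distinct edges share at most one endpoint, so `Ψ_L(H)(p, q)` does not depend on the
choice of common endpoint.
-/

theorem Sym2.mk_out_eq_or {α : Type*} (a b : α) :
    (s(a, b) : Sym2 α).out = (a, b) ∨ (s(a, b) : Sym2 α).out = (b, a) := by
  rcases Sym2.eq_iff.mp (Quot.out_eq (s(a, b) : Sym2 α)) with ⟨ha, hb⟩ | ⟨ha, hb⟩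
  · exact .inl (Prod.ext ha hb)
  · exact .inr (Prod.ext ha hb)

theorem Sym2.eq_of_mem_of_mem_of_ne {α : Type*} {p q : Sym2 α} {w w' : α} (hpq : p ≠ q)
    (hp : w ∈ p) (hq : w ∈ q) (hp' : w' ∈ p) (hq' : w' ∈ q) : w = w' := by
  by_contra hne
  exact hpq (((Sym2.mem_and_mem_iff hne).mp ⟨hp, hp'⟩).trans
    ((Sym2.mem_and_mem_iff hne).mp ⟨hq, hq'⟩).symm)

namespace GPhase

variable {V G : Type} [Group G] {Γ : SimpleGraph V}

open Classical in
noncomputable def ofGain (s : G) (ψ : V → V → G) : GPhase Γ G := fun v e _ =>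
  if v = (e : Sym2 V).out.1 then s * ψ (e : Sym2 V).out.1 (e : Sym2 V).out.2 else 1

theorem psiEq_ofGain {s : G} (hs : s * s = 1) (hsc : ∀ g : G, s * g = g * s)
    {ψ : V → V → G} (hψ : IsGainFun Γ ψ) : PsiEq s (ofGain (Γ := Γ) s ψ) ψ := by
  intro u v h
  rcases Sym2.mk_out_eq_or u v with hout | hout
  · simp [ofGain, hout, h.ne.symm, ← mul_assoc, hs]
  · simp only [ofGain, hout, h.ne, ↓reduceIte, mul_one, mul_inv_rev]
    rw [Commute.mul_inv_cancel_assoc (hsc (ψ v u)⁻¹), hψ h.symm]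

open Classical in
theorem exists_psiLEq (s : G) (H : GPhase Γ G) :
    ∃ ζ : Γ.edgeSet → Γ.edgeSet → G, PsiLEq s H ζ := by
  refine ⟨fun p q => if h : ∃ w, w ∈ (p : Sym2 V) ∧ w ∈ (q : Sym2 V) then
      s * (H h.choose p h.choose_spec.1)⁻¹ * H h.choose q h.choose_spec.2 else 1, ?_⟩
  intro p q w hp hq hpq
  have hex : ∃ w, w ∈ (p : Sym2 V) ∧ w ∈ (q : Sym2 V) := ⟨w, hp, hq⟩
  obtain rfl : hex.choose = w := Sym2.eq_of_mem_of_mem_of_ne (Subtype.coe_ne_coe.mpr hpq)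
    hex.choose_spec.1 hex.choose_spec.2 hp hq
  simp only [dif_pos hex]

end GPhase

theorem psi_surjective_general
    {V G : Type} [Group G] (Γ : SimpleGraph V)
    (s₁ s₂ : G) (hs₁ : s₁ * s₁ = 1) (hsc₁ : ∀ g : G, s₁ * g = g * s₁)
    (ψ : V → V → G) (hψ : IsGainFun Γ ψ) :
    ∃ H : GPhase Γ G, PsiEq s₁ H ψ ∧
      ∃ ζ : Γ.edgeSet → Γ.edgeSet → G, PsiLEq s₂ H ζ :=
  ⟨_, GPhase.psiEq_ofGain hs₁ hsc₁ hψ, GPhase.exists_psiLEq s₂ _⟩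

/-- The map `Ψ : ℋ_Γ → G(Γ)` is surjective: every gain graph `(Γ, ψ)` is `Ψ(H)` for
some `G`-phase `H`; in particular every gain graph admits a line graph `(L(Γ), ζ)`
with `ζ = Ψ_L(H)`. -/
theorem psi_surjective
    {V G : Type} [Group G] [Fintype V] (Γ : SimpleGraph V) (hE : Γ.edgeSet.Nonempty)
    (s₁ s₂ : G) (hs₁ : s₁ * s₁ = 1) (hsc₁ : ∀ g : G, s₁ * g = g * s₁)
    (hs₂ : s₂ * s₂ = 1) (hsc₂ : ∀ g : G, s₂ * g = g * s₂)
    (ψ : V → V → G) (hψ : IsGainFun Γ ψ) :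
    ∃ H : GPhase Γ G, PsiEq s₁ H ψ ∧
      ∃ ζ : Γ.edgeSet → Γ.edgeSet → G, PsiLEq s₂ H ζ :=
  psi_surjective_general Γ s₁ s₂ hs₁ hsc₁ ψ hψ
end

section
/- A connected gain graph (L,ζ), with L = (V_L, E_L), is a gain-line graph (with parameter s) if and only if there exists a partition E_L = E₁ ⊔ E₂ ⊔ ⋯ ⊔ E_k of the edge set such that every vertex of L is an endpoint of edges from at most two parts of the partition and, for each i = 1,…,k, the subgraph L_{E_i} of L edge-induced by E_i is a complete graph and the restricted gain function ζ_{E_i} is switching equivalent to the constant gain function 𝐬 in G(L_{E_i}). -/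
/-!
If `φ : L ≃g L(Γ)`, the edges of `L` fall into the stars of the vertices `w` of `Γ`: each star
is a clique, a vertex of `L` (an edge of `Γ`) lies in the stars of its two endpoints, and on the
star of `w` the formula for `Ψ_L(H)` says that `ζ` is switched to the constant `s` by `H(w, ·)`;
this uses that `s` is central. Conversely, given such a partition, Krausz's construction builds
the root graph: one vertex per part, plus private vertices padding each vertex of `L` that lies
in fewer than two parts, and each vertex `v` of `L` becomes the edge joining the parts through
`v`. Two parts meet in at most one vertex, so this is injective, and the switching functions
of the parts assemble into a phase.
-/

open SimpleGraph

/-- The set `V_L(B)` of endpoints of edges in `B`. -/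
def edgeVerts {V : Type} (Γ : SimpleGraph V) (B : Set Γ.edgeSet) : Set V :=
  {v | ∃ e ∈ B, v ∈ (e : Sym2 V)}

/-- The edge-induced subgraph `Γ_B = (V_Γ(B), B)`. -/
def edgeInduced {V : Type} (Γ : SimpleGraph V) (B : Set Γ.edgeSet) :
    SimpleGraph (edgeVerts Γ B) where
  Adj u v := ∃ e ∈ B, (e : Sym2 V) = s(u.val, v.val)
  symm := by
    constructor
    rintro u v ⟨e, he, h⟩
    exact ⟨e, he, by rw [h, Sym2.eq_swap]⟩
  loopless := by
    constructor
    rintro u ⟨e, he, h⟩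
    have h' := e.property
    rw [h] at h'
    exact Γ.irrefl ((SimpleGraph.mem_edgeSet (G := Γ)).mp h')

namespace Sym2

variable {α : Type*}

lemma eq_of_mem_of_mem_of_ne_s7 {z z' : Sym2 α} (hne : z ≠ z') {x y : α} (hx : x ∈ z)
    (hx' : x ∈ z') (hy : y ∈ z) (hy' : y ∈ z') : x = y := by
  by_contra hxy
  exact hne (eq_of_ne_mem hxy hx hy hx' hy')

lemma finite_coe (z : Sym2 α) : (z : Set α).Finite :=
  z.ind fun x y => by rw [coe_mk]; exact Set.toFinite _

lemma ncard_coe_le_two (z : Sym2 α) : (z : Set α).ncard ≤ 2 :=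
  z.ind fun x y => by rw [coe_mk]; exact (Set.ncard_insert_le x {y}).trans (by simp)

lemma exists_not_isDiag_inl_mem_iff {ι β : Type*} {T : Set ι} (hfin : T.Finite)
    (hT : T.ncard ≤ 2) {p q : β} (hpq : p ≠ q) :
    ∃ z : Sym2 (ι ⊕ β), ¬ z.IsDiag ∧ (∀ i, Sum.inl i ∈ z ↔ i ∈ T) ∧
      ∀ x, Sum.inr x ∈ z → x = p ∨ x = q := by
  obtain h | h | h : T.ncard = 0 ∨ T.ncard = 1 ∨ T.ncard = 2 := by omega
  · obtain rfl := (Set.ncard_eq_zero hfin).mp h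
    exact ⟨s(.inr p, .inr q), by simpa using hpq, by simp, by simp⟩
  · obtain ⟨i, rfl⟩ := Set.ncard_eq_one.mp h
    exact ⟨s(.inl i, .inr p), by simp, by simp, by simp⟩
  · obtain ⟨i, j, hij, rfl⟩ := Set.ncard_eq_two.mp h
    exact ⟨s(.inl i, .inl j), by simpa using hij, by simp, by simp⟩

end Sym2

/-- The right-hand side is the shape of `Ψ_L(H)` on the star of a vertex `w` of a root graph,
with `h = H(w, ·)`. -/
lemma switchingEquiv_const_iff {V G : Type} [Group G] (Γ : SimpleGraph V) (ψ : V → V → G) {s : G}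
    (hsc : ∀ g : G, s * g = g * s) :
    SwitchingEquiv Γ ψ (fun _ _ => s) ↔
      ∃ h : V → G, ∀ ⦃u v : V⦄, Γ.Adj u v → ψ u v = s * (h u)⁻¹ * h v := by
  constructor
  · rintro ⟨f, hf⟩
    refine ⟨fun v => (f v)⁻¹, fun u v huv => ?_⟩
    have hs : s = (f u)⁻¹ * ψ u v * f v := hf huv
    simp only [inv_inv]
    rw [hsc, hs]
    group
  · rintro ⟨h, hh⟩
    refine ⟨fun v => (h v)⁻¹, fun u v huv => ?_⟩
    rw [hh huv, inv_inv, hsc]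
    group

lemma adj_of_edgeInduced_eq_top {V : Type} {Γ : SimpleGraph V} {B : Set Γ.edgeSet}
    (hB : edgeInduced Γ B = ⊤) {u v : edgeVerts Γ B} (huv : u ≠ v) : (edgeInduced Γ B).Adj u v :=
  hB ▸ huv

/-- Since `Set.ncard` of an infinite set is `0`, for infinite `ι` the second clause only bounds
the vertices lying in finitely many parts. -/
def IsKrauszPartition {ι VL G : Type} [Group G] (s : G) (L : SimpleGraph VL)
    (ζ : VL → VL → G) (E : ι → Set L.edgeSet) : Prop :=
  (∀ e : L.edgeSet, ∃! i : ι, e ∈ E i) ∧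
    (∀ v : VL, {i : ι | ∃ e ∈ E i, v ∈ (e : Sym2 VL)}.ncard ≤ 2) ∧
    (∀ i : ι,
      edgeInduced L (E i) = (⊤ : SimpleGraph (edgeVerts L (E i))) ∧
      SwitchingEquiv (edgeInduced L (E i))
        (fun u v : edgeVerts L (E i) => ζ u.val v.val) (fun _ _ => s))

namespace IsKrauszPartition

variable {ι VL G : Type} [Group G] {s : G} {L : SimpleGraph VL} {ζ : VL → VL → G}
  {E : ι → Set L.edgeSet}

lemma exists_fin (hE : IsKrauszPartition s L ζ E) (hfin : {i | (E i).Nonempty}.Finite) :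
    ∃ (k : ℕ) (E' : Fin k → Set L.edgeSet), IsKrauszPartition s L ζ E' := by
  obtain ⟨huniq, hdeg, hparts⟩ := hE
  have := hfin.to_subtype
  obtain ⟨k, ⟨σ⟩⟩ := Finite.exists_equiv_fin {i | (E i).Nonempty}
  refine ⟨k, fun j => E (σ.symm j), fun e => ?_, fun v => ?_, fun j => hparts _⟩
  · obtain ⟨i, hi, hunique⟩ := huniq e
    refine ⟨σ ⟨i, e, hi⟩, by simpa using hi, fun j hj => ?_⟩
    exact σ.symm_apply_eq.mp (Subtype.ext (hunique _ hj))
  · refine (Set.ncard_le_ncard_of_injOn (fun j => (σ.symm j : ι)) (fun j hj => hj)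
      (Subtype.val_injective.comp σ.symm.injective |>.injOn) ?_).trans (hdeg v)
    exact hfin.subset fun i ⟨e, he, _⟩ => ⟨e, he⟩

lemma adj_iff (hE : IsKrauszPartition s L ζ E) {u v : VL} :
    L.Adj u v ↔ u ≠ v ∧ ∃ i, u ∈ edgeVerts L (E i) ∧ v ∈ edgeVerts L (E i) := by
  constructor
  · intro h
    obtain ⟨i, hi, -⟩ := hE.1 ⟨s(u, v), h⟩
    exact ⟨h.ne, i, ⟨_, hi, Sym2.mem_mk_left u v⟩, ⟨_, hi, Sym2.mem_mk_right u v⟩⟩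
  · rintro ⟨huv, i, hu, hv⟩
    obtain ⟨e, -, he⟩ := adj_of_edgeInduced_eq_top (hE.2.2 i).1
      (u := ⟨u, hu⟩) (v := ⟨v, hv⟩) (by simpa using huv)
    exact (mem_edgeSet L).mp (he ▸ e.2)

lemma eq_of_mem_edgeVerts (hE : IsKrauszPartition s L ζ E) {i j : ι} (hij : i ≠ j) {u v : VL}
    (hui : u ∈ edgeVerts L (E i)) (huj : u ∈ edgeVerts L (E j)) (hvi : v ∈ edgeVerts L (E i))
    (hvj : v ∈ edgeVerts L (E j)) : u = v := by
  by_contra huv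
  obtain ⟨e, hei, he⟩ := adj_of_edgeInduced_eq_top (hE.2.2 i).1
    (u := ⟨u, hui⟩) (v := ⟨v, hvi⟩) (by simpa using huv)
  obtain ⟨e', hej, he'⟩ := adj_of_edgeInduced_eq_top (hE.2.2 j).1
    (u := ⟨u, huj⟩) (v := ⟨v, hvj⟩) (by simpa using huv)
  obtain rfl : e = e' := Subtype.ext (he.trans he'.symm)
  exact hij ((hE.1 e).unique hei hej)

end IsKrauszPartition

section StarPartition

variable {VL V G : Type} [Group G] {L : SimpleGraph VL} {Γ : SimpleGraph V}
  (φ : L ≃g Γ.lineGraph)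

/-- The star of `w` in `Γ`, as a set of edges of `L`. -/
def starPart (w : V) : Set L.edgeSet :=
  {e | ∀ u ∈ (e : Sym2 VL), w ∈ (φ u : Sym2 V)}

variable {φ}

lemma mk_mem_starPart_iff {w : V} {a b : VL} (h : s(a, b) ∈ L.edgeSet) :
    (⟨s(a, b), h⟩ : L.edgeSet) ∈ starPart φ w ↔ w ∈ (φ a : Sym2 V) ∧ w ∈ (φ b : Sym2 V) := by
  simp [starPart]

lemma mem_of_mem_edgeVerts_starPart {w : V} {u : VL} (hu : u ∈ edgeVerts L (starPart φ w)) :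
    w ∈ (φ u : Sym2 V) := by
  obtain ⟨e, he, hue⟩ := hu
  exact he u hue

lemma adj_of_mem_of_mem {w : V} {u v : VL} (huv : u ≠ v) (hu : w ∈ (φ u : Sym2 V))
    (hv : w ∈ (φ v : Sym2 V)) : L.Adj u v :=
  φ.map_adj_iff.mp (lineGraph_adj_iff_exists.mpr ⟨φ.injective.ne huv, w, hu, hv⟩)

variable (φ)

lemma existsUnique_mem_starPart (e : L.edgeSet) : ∃! w, e ∈ starPart φ w := by
  obtain ⟨z, hz⟩ := e
  induction z using Sym2.ind with
  | h a b =>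
    obtain ⟨hne, w, ha, hb⟩ := lineGraph_adj_iff_exists.mp (φ.map_adj_iff.mpr hz)
    refine ⟨w, (mk_mem_starPart_iff hz).mpr ⟨ha, hb⟩, fun w' hw' => ?_⟩
    obtain ⟨ha', hb'⟩ := (mk_mem_starPart_iff hz).mp hw'
    exact Sym2.eq_of_mem_of_mem_of_ne_s7 (Subtype.coe_injective.ne hne) ha' hb' ha hb

lemma ncard_setOf_mem_starPart_le_two (v : VL) :
    {w | ∃ e ∈ starPart φ w, v ∈ (e : Sym2 VL)}.ncard ≤ 2 :=
  (Set.ncard_le_ncard (t := ((φ v : Sym2 V) : Set V)) (by rintro _ ⟨_, he, hv⟩; exact he v hv)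
    (φ v : Sym2 V).finite_coe).trans (φ v : Sym2 V).ncard_coe_le_two

lemma edgeInduced_starPart_eq_top (w : V) : edgeInduced L (starPart φ w) = ⊤ := by
  refine top_le_iff.mp fun u v huv => ?_
  have hu := mem_of_mem_edgeVerts_starPart u.2
  have hv := mem_of_mem_edgeVerts_starPart v.2
  have hadj := adj_of_mem_of_mem (Subtype.coe_injective.ne huv) hu hv
  exact ⟨⟨s(u, v), hadj⟩, (mk_mem_starPart_iff hadj).mpr ⟨hu, hv⟩, rfl⟩

lemma switchingEquiv_starPart {s : G} (hsc : ∀ g : G, s * g = g * s) {ζ : VL → VL → G}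
    {H : GPhase Γ G} (hH : PsiLEq s H fun p q => ζ (φ.symm p) (φ.symm q)) (w : V) :
    SwitchingEquiv (edgeInduced L (starPart φ w)) (fun u v => ζ u.val v.val)
      (fun _ _ => s) := by
  refine (switchingEquiv_const_iff _ _ hsc).mpr
    ⟨fun u => H w (φ u) (mem_of_mem_edgeVerts_starPart u.2), fun u v huv => ?_⟩
  have huv' := φ.injective.ne (Subtype.coe_injective.ne ((edgeInduced L _).ne_of_adj huv))
  simpa using hH (φ u) (φ v) w _ _ huv'

lemma finite_setOf_starPart_nonempty [Finite VL] : {w | (starPart φ w).Nonempty}.Finite :=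
  (Set.finite_iUnion fun v => (φ v : Sym2 V).finite_coe).subset fun _ ⟨e, he⟩ =>
    Set.mem_iUnion.mpr ⟨_, he _ (e : Sym2 VL).out_fst_mem⟩

end StarPartition

theorem IsGainLine.exists_isKrauszPartition {VL G : Type} [Group G] [Finite VL]
    {L : SimpleGraph VL} {s : G} (hsc : ∀ g : G, s * g = g * s) {ζ : VL → VL → G}
    (h : IsGainLine s L ζ) :
    ∃ (k : ℕ) (E : Fin k → Set L.edgeSet), IsKrauszPartition s L ζ E := by
  obtain ⟨V', Γ, φ, H, hH⟩ := h
  have hE : IsKrauszPartition s L ζ (starPart φ) :=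
    ⟨existsUnique_mem_starPart φ, ncard_setOf_mem_starPart_le_two φ,
      fun w => ⟨edgeInduced_starPart_eq_top φ w, switchingEquiv_starPart φ hsc hH w⟩⟩
  exact hE.exists_fin (finite_setOf_starPart_nonempty φ)

/-- `P v` is an edge joining the parts `i` with `v ∈ C i`, padded by private endpoints
`Sum.inr (v, _)` when `v` lies in fewer than two parts. -/
structure IsRootEdges {ι VL : Type} (C : ι → Set VL) (P : VL → Sym2 (ι ⊕ VL × Bool)) : Prop where
  not_isDiag : ∀ v, ¬ (P v).IsDiag
  inl_mem_iff : ∀ v i, Sum.inl i ∈ P v ↔ v ∈ C i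
  eq_of_inr_mem : ∀ v x, Sum.inr x ∈ P v → x.1 = v

namespace IsRootEdges

variable {ι VL : Type} {C : ι → Set VL} {P : VL → Sym2 (ι ⊕ VL × Bool)}

lemma exists_of_ncard_le_two [Finite ι] (hC : ∀ v, {i | v ∈ C i}.ncard ≤ 2) :
    ∃ P, IsRootEdges C P := by
  choose P hdiag hinl hinr using fun v =>
    Sym2.exists_not_isDiag_inl_mem_iff (Set.toFinite _) (hC v) (p := (v, false)) (q := (v, true))
      (by simp)
  exact ⟨P, ⟨hdiag, hinl, fun v x hx => by obtain rfl | rfl := hinr v x hx <;> rfl⟩⟩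

lemma exists_inl_of_mem_of_mem (hP : IsRootEdges C P) {u v : VL} (huv : u ≠ v)
    {x : ι ⊕ VL × Bool} (hu : x ∈ P u) (hv : x ∈ P v) :
    ∃ i, x = Sum.inl i ∧ u ∈ C i ∧ v ∈ C i := by
  rcases x with i | y
  · exact ⟨i, rfl, (hP.inl_mem_iff u i).mp hu, (hP.inl_mem_iff v i).mp hv⟩
  · exact absurd ((hP.eq_of_inr_mem u y hu).symm.trans (hP.eq_of_inr_mem v y hv)) huv

lemma exists_mem_mem_iff (hP : IsRootEdges C P) {u v : VL} (huv : u ≠ v) :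
    (∃ x, x ∈ P u ∧ x ∈ P v) ↔ ∃ i, u ∈ C i ∧ v ∈ C i := by
  constructor
  · rintro ⟨x, hu, hv⟩
    obtain ⟨i, -, hi⟩ := hP.exists_inl_of_mem_of_mem huv hu hv
    exact ⟨i, hi⟩
  · rintro ⟨i, hu, hv⟩
    exact ⟨.inl i, (hP.inl_mem_iff u i).mpr hu, (hP.inl_mem_iff v i).mpr hv⟩

/-- Both endpoints of `P u = P v` would be parts containing `u` and `v`. -/
lemma injective (hP : IsRootEdges C P)
    (hC : ∀ i j, i ≠ j → ∀ u v, u ∈ C i → u ∈ C j → v ∈ C i → v ∈ C j → u = v) :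
    Function.Injective P := by
  intro u v huv
  by_contra hne
  induction h : P u using Sym2.ind with
  | h x y =>
    have hx : x ∈ P u := h ▸ Sym2.mem_mk_left x y
    have hy : y ∈ P u := h ▸ Sym2.mem_mk_right x y
    obtain ⟨i, rfl, hui, hvi⟩ := hP.exists_inl_of_mem_of_mem hne hx (huv ▸ hx)
    obtain ⟨j, rfl, huj, hvj⟩ := hP.exists_inl_of_mem_of_mem hne hy (huv ▸ hy)
    have hij : i ≠ j := fun hij => hP.not_isDiag u (h ▸ Sym2.mk_isDiag_iff.mpr (hij ▸ rfl))
    exact hne (hC i j hij u v hui huj hvi hvj)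

end IsRootEdges

noncomputable def isoLineGraphFromEdgeSetRange {VL W : Type} {L : SimpleGraph VL}
    (P : VL → Sym2 W) (hP : Function.Injective P) (hdiag : ∀ v, ¬ (P v).IsDiag)
    (hadj : ∀ u v, L.Adj u v ↔ u ≠ v ∧ ∃ x, x ∈ P u ∧ x ∈ P v) :
    L ≃g (fromEdgeSet (Set.range P)).lineGraph where
  toEquiv := Equiv.ofBijective (fun v => ⟨P v, by simp [edgeSet_fromEdgeSet, hdiag v]⟩)
    ⟨fun _ _ h => hP (congrArg Subtype.val h), by
      rintro ⟨_, he⟩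
      obtain ⟨⟨v, rfl⟩, -⟩ := (by simpa [edgeSet_fromEdgeSet] using he)
      exact ⟨v, rfl⟩⟩
  map_rel_iff' := by
    intro u v
    rw [lineGraph_adj_iff_exists, hadj]
    exact and_congr (Equiv.injective _).ne_iff Iff.rfl

theorem IsKrauszPartition.isGainLine {ι VL G : Type} [Group G] [Finite ι] {s : G}
    {L : SimpleGraph VL} {ζ : VL → VL → G} {E : ι → Set L.edgeSet}
    (hsc : ∀ g : G, s * g = g * s) (hE : IsKrauszPartition s L ζ E) : IsGainLine s L ζ := by
  classical
  obtain ⟨P, hP⟩ := IsRootEdges.exists_of_ncard_le_two (C := fun i => edgeVerts L (E i)) hE.2.1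
  let φ := isoLineGraphFromEdgeSetRange P
    (hP.injective fun _ _ hij _ _ => hE.eq_of_mem_edgeVerts hij) hP.not_isDiag
    fun _ _ => hE.adj_iff.trans (and_congr_right fun huv => (hP.exists_mem_mem_iff huv).symm)
  choose h hh using fun i => (switchingEquiv_const_iff _ _ hsc).mp (hE.2.2 i).2
  let H : GPhase (fromEdgeSet (Set.range P)) G := fun x e _ =>
    Sum.elim (fun i => if hv : φ.symm e ∈ edgeVerts L (E i) then h i ⟨_, hv⟩ else 1)
      (fun _ => 1) x
  refine ⟨_, _, φ, H, fun p q w hp hq hpq => ?_⟩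
  obtain ⟨u, rfl⟩ := φ.surjective p
  obtain ⟨v, rfl⟩ := φ.surjective q
  have huv : u ≠ v := fun h => hpq (congrArg φ h)
  obtain ⟨i, rfl, hu, hv⟩ := hP.exists_inl_of_mem_of_mem huv hp hq
  simp only [H, RelIso.symm_apply_apply, Sum.elim_inl, dif_pos hu, dif_pos hv]
  exact hh i (adj_of_edgeInduced_eq_top (hE.2.2 i).1
    (u := ⟨u, hu⟩) (v := ⟨v, hv⟩) (by simpa using huv))

theorem gainLine_iff_krausz_general
    {VL G : Type} [Group G] [Fintype VL] (L : SimpleGraph VL)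
    (s : G) (hsc : ∀ g : G, s * g = g * s)
    (ζ : VL → VL → G) :
    IsGainLine s L ζ ↔
      ∃ (k : ℕ) (E : Fin k → Set L.edgeSet),
        (∀ e : L.edgeSet, ∃! i : Fin k, e ∈ E i) ∧
        (∀ v : VL, {i : Fin k | ∃ e ∈ E i, v ∈ (e : Sym2 VL)}.ncard ≤ 2) ∧
        (∀ i : Fin k,
          edgeInduced L (E i) = (⊤ : SimpleGraph (edgeVerts L (E i))) ∧
          SwitchingEquiv (edgeInduced L (E i))
            (fun u v : edgeVerts L (E i) => ζ u.val v.val) (fun _ _ => s)) :=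
  ⟨IsGainLine.exists_isKrauszPartition hsc,
    fun ⟨_, _, hE⟩ => IsKrauszPartition.isGainLine hsc hE⟩

/-- **Krausz-type characterization (Theorem 3.2, (1) ⟺ (2)).** A connected gain graph
`(L, ζ)` is a gain-line graph if and only if there is a partition `E_L = E₁ ⊔ ⋯ ⊔ E_k`
of its edge set such that every vertex is an endpoint of edges from at most two parts
and each edge-induced gain subgraph `(L_{E_i}, ζ_{E_i})` is a complete graph whose
gain function is switching equivalent to `𝐬`. -/
theorem gainLine_iff_krausz
    {VL G : Type} [Group G] [Fintype VL] (L : SimpleGraph VL) (hconn : L.Connected)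
    (hE : L.edgeSet.Nonempty)
    (s : G) (hs : s * s = 1) (hsc : ∀ g : G, s * g = g * s)
    (ζ : VL → VL → G) (hζ : IsGainFun L ζ) :
    IsGainLine s L ζ ↔
      ∃ (k : ℕ) (E : Fin k → Set L.edgeSet),
        (∀ e : L.edgeSet, ∃! i : Fin k, e ∈ E i) ∧
        (∀ v : VL, {i : Fin k | ∃ e ∈ E i, v ∈ (e : Sym2 VL)}.ncard ≤ 2) ∧
        (∀ i : Fin k,
          edgeInduced L (E i) = (⊤ : SimpleGraph (edgeVerts L (E i))) ∧
          SwitchingEquiv (edgeInduced L (E i))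
            (fun u v : edgeVerts L (E i) => ζ u.val v.val) (fun _ _ => s)) :=
  gainLine_iff_krausz_general L s hsc ζ
end

section
/- Let P be the paw graph and ζ a gain function on P. Then (P,ζ) is a gain-line graph (with parameter s) if and only if ζ is switching equivalent to the constant gain function 𝐬. -/
open SimpleGraph

/-- The paw graph: a triangle `0, 1, 2` together with the pendant vertex `3`
adjacent to `0` only. -/
def pawGraph : SimpleGraph (Fin 4) :=
  SimpleGraph.fromRel (fun u v =>
    (u = 0 ∧ v = 1) ∨ (u = 1 ∧ v = 2) ∨ (u = 0 ∧ v = 2) ∨ (u = 0 ∧ v = 3))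
lemma paw01 : pawGraph.Adj 0 1 := (SimpleGraph.fromRel_adj _ _ _).mpr (by decide)
lemma paw12 : pawGraph.Adj 1 2 := (SimpleGraph.fromRel_adj _ _ _).mpr (by decide)
lemma paw02 : pawGraph.Adj 0 2 := (SimpleGraph.fromRel_adj _ _ _).mpr (by decide)
lemma paw03 : pawGraph.Adj 0 3 := (SimpleGraph.fromRel_adj _ _ _).mpr (by decide)

lemma switch_iff {G : Type} [Group G] (s : G) (hs : s * s = 1) (hsc : ∀ g : G, s * g = g * s)
    (ζ : Fin 4 → Fin 4 → G) (hζ : IsGainFun pawGraph ζ) :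
    SwitchingEquiv pawGraph ζ (fun _ _ => s) ↔ ζ 0 1 * ζ 1 2 * ζ 2 0 = s := by
  have hsi : s⁻¹ = s := by rw [inv_eq_iff_mul_eq_one]; exact hs
  constructor
  · rintro ⟨f, hf⟩
    have e01 : ζ 0 1 = f 0 * s * (f 1)⁻¹ := by have := hf paw01; simp at this; rw [this]; group
    have e12 : ζ 1 2 = f 1 * s * (f 2)⁻¹ := by have := hf paw12; simp at this; rw [this]; group
    have e02 : ζ 0 2 = f 0 * s * (f 2)⁻¹ := by have := hf paw02; simp at this; rw [this]; group
    have e20 : ζ 2 0 = f 2 * s * (f 0)⁻¹ := by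
      rw [hζ paw02, e02, mul_inv_rev, mul_inv_rev, inv_inv, hsi, ← mul_assoc]
    rw [e01, e12, e20]
    have : f 0 * s * (f 1)⁻¹ * (f 1 * s * (f 2)⁻¹) * (f 2 * s * (f 0)⁻¹)
        = f 0 * (s * s * s) * (f 0)⁻¹ := by group
    rw [this, hs, one_mul, ← hsc]
    simp [mul_assoc]
  · intro hC
    refine ⟨fun i => if i = 0 then 1 else if i = 1 then (ζ 0 1)⁻¹ * s
      else if i = 2 then (ζ 0 2)⁻¹ * s else (ζ 0 3)⁻¹ * s, ?_⟩
    intro u v huv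
    have h := (SimpleGraph.fromRel_adj _ _ _).mp huv
    have h10 : ζ 1 0 = (ζ 0 1)⁻¹ := hζ paw01
    have h21 : ζ 2 1 = (ζ 1 2)⁻¹ := hζ paw12
    have h20 : ζ 2 0 = (ζ 0 2)⁻¹ := hζ paw02
    have h30 : ζ 3 0 = (ζ 0 3)⁻¹ := hζ paw03
    have h12 : ζ 1 2 = (ζ 0 1)⁻¹ * s * ζ 0 2 := by
      have h2 : ζ 0 1 * (ζ 1 2 * ζ 2 0) * ζ 0 2 = s * ζ 0 2 := by
        rw [show ζ 0 1 * (ζ 1 2 * ζ 2 0) * ζ 0 2 = (ζ 0 1 * ζ 1 2 * ζ 2 0) * ζ 0 2 by group, hC]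
      rw [show ζ 0 1 * (ζ 1 2 * ζ 2 0) * ζ 0 2 = ζ 0 1 * ζ 1 2 * (ζ 2 0 * ζ 0 2) by group, h20] at h2
      simp only [inv_mul_cancel, mul_one] at h2
      rw [mul_assoc, ← h2, inv_mul_cancel_left]
    rcases h.2 with (⟨rfl,rfl⟩|⟨rfl,rfl⟩|⟨rfl,rfl⟩|⟨rfl,rfl⟩)|(⟨rfl,rfl⟩|⟨rfl,rfl⟩|⟨rfl,rfl⟩|⟨rfl,rfl⟩) <;>
      simp only [Fin.reduceEq, if_true, if_false, ite_true, ite_false, reduceIte]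
    all_goals try rw [h10]
    all_goals try rw [h21]
    all_goals try rw [h20]
    all_goals try rw [h30]
    all_goals try rw [h12]
    all_goals group
    all_goals try rw [zpow_neg, zpow_one, hsi]

def chairGraph : SimpleGraph (Fin 5) :=
  SimpleGraph.fromRel (fun u v => (u = 0 ∧ v = 1) ∨ (u = 0 ∧ v = 2) ∨ (u = 0 ∧ v = 3) ∨ (u = 3 ∧ v = 4))

lemma chair01 : chairGraph.Adj 0 1 := (SimpleGraph.fromRel_adj _ _ _).mpr (by decide)
lemma chair02 : chairGraph.Adj 0 2 := (SimpleGraph.fromRel_adj _ _ _).mpr (by decide)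
lemma chair03 : chairGraph.Adj 0 3 := (SimpleGraph.fromRel_adj _ _ _).mpr (by decide)
lemma chair34 : chairGraph.Adj 3 4 := (SimpleGraph.fromRel_adj _ _ _).mpr (by decide)

def ce01 : chairGraph.edgeSet := ⟨s(0,1), chairGraph.mem_edgeSet.mpr chair01⟩
def ce02 : chairGraph.edgeSet := ⟨s(0,2), chairGraph.mem_edgeSet.mpr chair02⟩
def ce03 : chairGraph.edgeSet := ⟨s(0,3), chairGraph.mem_edgeSet.mpr chair03⟩
def ce34 : chairGraph.edgeSet := ⟨s(3,4), chairGraph.mem_edgeSet.mpr chair34⟩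

lemma chair_edges (e : Sym2 (Fin 5)) (he : e ∈ chairGraph.edgeSet) :
    e = s(0,1) ∨ e = s(0,2) ∨ e = s(0,3) ∨ e = s(3,4) := by
  induction e using Sym2.ind with
  | _ u v =>
    rw [SimpleGraph.mem_edgeSet] at he
    have h := (SimpleGraph.fromRel_adj _ _ _).mp he
    revert h
    fin_cases u <;> fin_cases v <;> decide

def chairEquiv : Fin 4 ≃ chairGraph.edgeSet where
  toFun i := if i = 0 then ce03 else if i = 1 then ce01 else if i = 2 then ce02 else ce34
  invFun e := if e.val = s(0,3) then 0 else if e.val = s(0,1) then 1 else if e.val = s(0,2) then 2 else 3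
  left_inv := by
    intro i
    fin_cases i <;> simp [ce01, ce02, ce03, ce34, Sym2.eq_iff]
  right_inv := by
    rintro ⟨e, he⟩
    rcases chair_edges e he with rfl|rfl|rfl|rfl <;>
      simp [ce01, ce02, ce03, ce34, Sym2.eq_iff]

def chairIso : pawGraph ≃g chairGraph.lineGraph where
  toEquiv := chairEquiv
  map_rel_iff' := by
    intro a b
    fin_cases a <;> fin_cases b <;>
      simp [chairEquiv, ce01, ce02, ce03, ce34, lineGraph_adj_iff_exists, pawGraph,
        SimpleGraph.fromRel_adj, Sym2.eq_iff, Subtype.ext_iff]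

lemma chairIso_symm01 (h : s(0,1) ∈ chairGraph.edgeSet) : chairIso.symm ⟨s(0,1), h⟩ = 1 := by
  simp [chairIso, chairEquiv, Sym2.eq_iff]
lemma chairIso_symm02 (h : s(0,2) ∈ chairGraph.edgeSet) : chairIso.symm ⟨s(0,2), h⟩ = 2 := by
  simp [chairIso, chairEquiv, Sym2.eq_iff]
lemma chairIso_symm03 (h : s(0,3) ∈ chairGraph.edgeSet) : chairIso.symm ⟨s(0,3), h⟩ = 0 := by
  simp [chairIso, chairEquiv, Sym2.eq_iff]
lemma chairIso_symm34 (h : s(3,4) ∈ chairGraph.edgeSet) : chairIso.symm ⟨s(3,4), h⟩ = 3 := by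
  simp [chairIso, chairEquiv, Sym2.eq_iff]

lemma chair_gainLine {G : Type} [Group G] (s : G) (hs : s * s = 1) (hsc : ∀ g : G, s * g = g * s)
    (ζ : Fin 4 → Fin 4 → G) (hζ : IsGainFun pawGraph ζ)
    (hC : ζ 0 1 * ζ 1 2 * ζ 2 0 = s) : IsGainLine s pawGraph ζ := by
  have hsi : s⁻¹ = s := by rw [inv_eq_iff_mul_eq_one]; exact hs
  have conj : ∀ g : G, s * g * s⁻¹ = g := by
    intro g; rw [hsc g, mul_assoc, mul_inv_cancel, mul_one]
  have h10 : ζ 1 0 = (ζ 0 1)⁻¹ := hζ paw01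
  have h21 : ζ 2 1 = (ζ 1 2)⁻¹ := hζ paw12
  have h20 : ζ 2 0 = (ζ 0 2)⁻¹ := hζ paw02
  have h30 : ζ 3 0 = (ζ 0 3)⁻¹ := hζ paw03
  have d2 : ζ 0 2 = s * (ζ 0 1 * ζ 1 2) := by
    have : ζ 0 1 * ζ 1 2 = s * ζ 0 2 := by
      rw [← hC, h20]; group
    rw [this, ← mul_assoc, hs, one_mul]
  have d1 : ζ 2 0 = s * ζ 2 1 * ζ 1 0 := by
    rw [h21, h10, h20, d2]
    rw [show (s * (ζ 0 1 * ζ 1 2))⁻¹ = (ζ 1 2)⁻¹ * (ζ 0 1)⁻¹ * s⁻¹ from by group, hsi, ← hsc]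
    group
  refine ⟨Fin 5, chairGraph, chairIso,
    (fun v e _ => if e.val = s(0,1) then 1 else if e.val = s(0,2) then s * ζ 1 2
      else if e.val = s(0,3) then (if v = 0 then s * ζ 1 0 else 1)
      else (if v = 3 then s * ζ 0 3 else 1)), ?_⟩
  rintro ⟨pv, hpm⟩ ⟨qv, hqm⟩ w hp hq hne
  rcases chair_edges pv hpm with rfl|rfl|rfl|rfl <;> rcases chair_edges qv hqm with rfl|rfl|rfl|rfl
  all_goals try exact absurd rfl hne
  all_goals rcases Sym2.mem_iff.mp hp with rfl|rfl
  all_goals rcases Sym2.mem_iff.mp hq with h'|h'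
  all_goals try exact absurd h' (by decide)
  all_goals simp only [chairIso_symm01, chairIso_symm02, chairIso_symm03, chairIso_symm34]
  all_goals norm_num [Sym2.eq_iff, Fin.ext_iff, show ((3:Fin 5):ℕ) = 3 from rfl, show ((4:Fin 5):ℕ) = 4 from rfl]
  all_goals first
    | (rw [← mul_assoc, hs, one_mul]; done)
    | (rw [h21, ← mul_assoc, conj]; done)
    | (rw [d1, h21]; group)
    | (rw [h10, inv_inv, ← mul_assoc, conj]; done)
    | (rw [d2, h10]; group)
    | (rw [h30, ← mul_assoc, conj]; done)

lemma sym2_mem_classify {V : Type} (z : Sym2 V) (x y u : V) (hx : x ∈ z) (hy : y ∈ z)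
    (hu : u ∈ z) (hxy : x ≠ y) : u = x ∨ u = y := by
  induction z using Sym2.ind with
  | _ a b =>
    simp only [Sym2.mem_iff] at hx hy hu
    rcases hx with rfl|rfl <;> rcases hy with rfl|rfl <;> tauto

lemma gainLine_cond {G : Type} [Group G] (s : G) (hs : s * s = 1) (hsc : ∀ g : G, s * g = g * s)
    (ζ : Fin 4 → Fin 4 → G) (h : IsGainLine s pawGraph ζ) :
    ζ 0 1 * ζ 1 2 * ζ 2 0 = s := by
  obtain ⟨V', Γ, φ, H, hH⟩ := h
  have pawN31 : ¬ pawGraph.Adj 3 1 := fun h => absurd ((SimpleGraph.fromRel_adj _ _ _).mp h) (by decide)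
  have pawN32 : ¬ pawGraph.Adj 3 2 := fun h => absurd ((SimpleGraph.fromRel_adj _ _ _).mp h) (by decide)
  have a01 : Γ.lineGraph.Adj (φ 0) (φ 1) := φ.map_rel_iff.mpr paw01
  have a12 : Γ.lineGraph.Adj (φ 1) (φ 2) := φ.map_rel_iff.mpr paw12
  have a02 : Γ.lineGraph.Adj (φ 0) (φ 2) := φ.map_rel_iff.mpr paw02
  have a03 : Γ.lineGraph.Adj (φ 0) (φ 3) := φ.map_rel_iff.mpr paw03
  rw [lineGraph_adj_iff_exists] at a01 a12 a02 a03
  obtain ⟨ne01, w1, hw1p0, hw1p1⟩ := a01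
  obtain ⟨ne12, -⟩ := a12
  obtain ⟨ne02, w2, hw2p0, hw2p2⟩ := a02
  obtain ⟨ne03, w3, hw3p0, hw3p3⟩ := a03
  by_cases hw : w1 = w2
  · subst hw
    have E01 := hH (φ 0) (φ 1) w1 hw1p0 hw1p1 ne01
    have E12 := hH (φ 1) (φ 2) w1 hw1p1 hw2p2 ne12
    have E20 := hH (φ 2) (φ 0) w1 hw2p2 hw1p0 (Ne.symm ne02)
    simp only [RelIso.symm_apply_apply] at E01 E12 E20
    rw [E01, E12, E20]
    set A := H w1 (φ 0) hw1p0 with hA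
    set B := H w1 (φ 1) hw1p1 with hB
    set C := H w1 (φ 2) hw2p2 with hC
    have hs2 : ∀ a b : G, (s*a)*(s*b) = a*b := by
      intro a b
      rw [show (s*a)*(s*b) = s*(a*s)*b from by group, ← hsc,
        show s*(s*a)*b = (s*s)*(a*b) from by group, hs, one_mul]
    calc (s*A⁻¹*B)*(s*B⁻¹*C)*(s*C⁻¹*A)
        = (s*(A⁻¹*B))*(s*(B⁻¹*C))*(s*(C⁻¹*A)) := by group
      _ = ((A⁻¹*B)*(B⁻¹*C))*(s*(C⁻¹*A)) := by rw [hs2]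
      _ = ((A⁻¹*B)*(B⁻¹*C))*s*(C⁻¹*A) := by group
      _ = s*((A⁻¹*B)*(B⁻¹*C))*(C⁻¹*A) := by rw [← hsc]
      _ = s*(((A⁻¹*B)*(B⁻¹*C))*(C⁻¹*A)) := by group
      _ = s*1 := by rw [show ((A⁻¹*B)*(B⁻¹*C))*(C⁻¹*A) = 1 from by group]
      _ = s := mul_one s
  · rcases sym2_mem_classify _ w1 w2 w3 hw1p0 hw2p0 hw3p0 hw with rfl|rfl
    · have ne31 : (φ 3) ≠ (φ 1) := fun h => absurd (EmbeddingLike.injective φ h) (by decide)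
      have hadj : Γ.lineGraph.Adj (φ 3) (φ 1) := lineGraph_adj_iff_exists.mpr ⟨ne31, w3, hw3p3, hw1p1⟩
      exact absurd (φ.map_rel_iff.mp hadj) pawN31
    · have ne32 : (φ 3) ≠ (φ 2) := fun h => absurd (EmbeddingLike.injective φ h) (by decide)
      have hadj : Γ.lineGraph.Adj (φ 3) (φ 2) := lineGraph_adj_iff_exists.mpr ⟨ne32, w3, hw3p3, hw2p2⟩
      exact absurd (φ.map_rel_iff.mp hadj) pawN32

/-- `(P, ζ)` is a gain-line graph if and only if `ζ ∼ 𝐬` (part of Eq. (3.3):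
the paw graphs with gain not switching equivalent to `𝐬` are forbidden). -/
theorem pawGraph_gainLine_iff
    {G : Type} [Group G] (s : G) (hs : s * s = 1) (hsc : ∀ g : G, s * g = g * s)
    (ζ : Fin 4 → Fin 4 → G) (hζ : IsGainFun pawGraph ζ) :
    IsGainLine s pawGraph ζ ↔ SwitchingEquiv pawGraph ζ (fun _ _ => s) := by
  constructor
  · intro h
    exact (switch_iff s hs hsc ζ hζ).mpr (gainLine_cond s hs hsc ζ h)
  · intro h
    exact chair_gainLine s hs hsc ζ hζ ((switch_iff s hs hsc ζ hζ).mp h)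
end

section
/- Let n > 3 and let ζ be a gain function on the complete graph K_n. Then (K_n,ζ) is a gain-line graph (with parameter s) if and only if ζ is switching equivalent to the constant gain function 𝐬. -/
/-!
Four pairwise intersecting edges always pass through a common vertex: if two of them meet at `w`,
say `{w, a}` and `{w, b}`, any edge avoiding `w` must be `{a, b}`, and then every edge of the
family lies in the triangle `{w, a, b}`, which has only three edges. Hence, when `K_n ≅ L(Γ)` with
`n > 3`, the edges of `Γ` corresponding to the vertices of `K_n` form a star centred at some `w`,
and switching `ζ` by `i ↦ H(w, eᵢ)⁻¹` gives `𝐬` because `s` is central. Conversely `K_n` is the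
line graph of the star `K_{1,n}`, and a switching function `f` with `ζ ∼ 𝐬` yields the phase
`H(v, eᵢ) = f(i)⁻¹`.
-/

open SimpleGraph

namespace Sym2

variable {V : Type*}

lemma mem_of_exists_common_mem_mk {e : Sym2 V} {w a : V} (h : ∃ x, x ∈ s(w, a) ∧ x ∈ e)
    (hw : w ∉ e) : a ∈ e := by
  obtain ⟨x, hx, hxe⟩ := h
  rcases mem_iff.mp hx with rfl | rfl
  · exact absurd hxe hw
  · exact hxe

theorem exists_forall_mem_of_pairwise_exists_common_mem {S : Set (Sym2 V)}
    (hS : S.Pairwise fun e f => ∃ x, x ∈ e ∧ x ∈ f) (hcard : 3 < S.encard) :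
    ∃ w, ∀ e ∈ S, w ∈ e := by
  obtain ⟨e₀, e₁, he₀, he₁, hne⟩ := Set.one_lt_encard_iff.mp (lt_trans (by norm_num) hcard)
  obtain ⟨w, hw₀, hw₁⟩ := hS he₀ he₁ hne
  refine ⟨w, fun e he => ?_⟩
  by_contra hwe
  obtain ⟨a, rfl⟩ := mem_iff_exists.mp hw₀
  obtain ⟨b, rfl⟩ := mem_iff_exists.mp hw₁
  have hab : a ≠ b := by rintro rfl; exact hne rfl
  have ne_of_not_mem : ∀ {f c}, w ∉ f → s(w, c) ≠ f := fun hwf h => hwf (h ▸ mem_mk_left _ _)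
  have third_side : ∀ f ∈ S, w ∉ f → f = s(a, b) := fun f hf hwf =>
    (mem_and_mem_iff hab).mp
      ⟨mem_of_exists_common_mem_mk (hS he₀ hf (ne_of_not_mem hwf)) hwf,
        mem_of_exists_common_mem_mk (hS he₁ hf (ne_of_not_mem hwf)) hwf⟩
  obtain rfl := third_side e he hwe
  have hsub : S ⊆ {s(w, a), s(w, b), s(a, b)} := by
    intro f hf
    by_cases hwf : w ∈ f
    · obtain ⟨x, hx, hxf⟩ := hS he hf fun h => hwe (h ▸ hwf)
      rw [(mem_and_mem_iff (ne_of_mem_of_not_mem hx hwe).symm).mp ⟨hwf, hxf⟩]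
      rcases mem_iff.mp hx with rfl | rfl <;> simp
    · exact .inr (.inr (third_side f hf hwf))
  have hle : S.encard ≤ 3 := by
    grw [Set.encard_le_encard hsub, Set.encard_insert_le, Set.encard_insert_le,
      Set.encard_singleton]
    norm_num
  exact absurd hcard hle.not_gt

end Sym2

theorem SimpleGraph.exists_forall_mem_of_top_embedding_lineGraph {ι V : Type*}
    {Γ : SimpleGraph V} (φ : (⊤ : SimpleGraph ι) ↪g Γ.lineGraph) (hι : 3 < ENat.card ι) :
    ∃ w, ∀ i, w ∈ (φ i : Sym2 V) := by
  have hinj : Function.Injective fun i => (φ i : Sym2 V) :=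
    Subtype.val_injective.comp φ.injective
  have hmeet : (Set.range fun i => (φ i : Sym2 V)).Pairwise fun e f => ∃ x, x ∈ e ∧ x ∈ f := by
    rintro _ ⟨i, rfl⟩ _ ⟨j, rfl⟩ hne
    have hij : i ≠ j := by rintro rfl; exact hne rfl
    exact (lineGraph_adj_iff_exists.mp (φ.map_rel_iff.mpr ((top_adj i j).mpr hij))).2
  obtain ⟨w, hw⟩ := Sym2.exists_forall_mem_of_pairwise_exists_common_mem hmeet
    (hι.trans_le hinj.encard_range)
  exact ⟨w, fun i => hw _ ⟨i, rfl⟩⟩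

theorem IsGainLine.switchingEquiv_top {ι G : Type} [Group G] {s : G}
    (hsc : ∀ g : G, s * g = g * s) {ζ : ι → ι → G} (hι : 3 < ENat.card ι)
    (h : IsGainLine s ⊤ ζ) : SwitchingEquiv ⊤ ζ fun _ _ => s := by
  obtain ⟨V', Γ, φ, H, hH⟩ := h
  obtain ⟨w, hw⟩ := exists_forall_mem_of_top_embedding_lineGraph φ.toEmbedding hι
  refine ⟨fun i => (H w (φ i) (hw i))⁻¹, fun i j hij => ?_⟩
  have hζ := hH (φ i) (φ j) w (hw i) (hw j) (φ.injective.ne ((top_adj i j).mp hij))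
  simp only [RelIso.symm_apply_apply] at hζ
  rw [hζ, inv_inv, hsc]
  group

noncomputable def starGraphEdgeEquiv (ι : Type*) : ι ≃ (starGraph (none : Option ι)).edgeSet :=
  Equiv.ofBijective (fun i => ⟨s(none, some i), by simp⟩) <| by
    refine ⟨fun i j h => by simpa using congrArg Subtype.val h, ?_⟩
    rintro ⟨e, he⟩
    induction e using Sym2.ind with
    | _ x y =>
      obtain ⟨hxy, rfl | rfl⟩ := starGraph_adj.mp he
      · obtain ⟨i, rfl⟩ := Option.ne_none_iff_exists'.mp hxy.symm
        exact ⟨i, rfl⟩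
      · obtain ⟨i, rfl⟩ := Option.ne_none_iff_exists'.mp hxy
        exact ⟨i, Subtype.ext Sym2.eq_swap⟩

noncomputable def starGraphLineGraphIso (ι : Type*) :
    (⊤ : SimpleGraph ι) ≃g (starGraph (none : Option ι)).lineGraph where
  toEquiv := starGraphEdgeEquiv ι
  map_rel_iff' {i j} := by
    rw [lineGraph_adj_iff_exists, top_adj, (starGraphEdgeEquiv ι).injective.ne_iff]
    exact and_iff_left ⟨none, Sym2.mem_mk_left _ _, Sym2.mem_mk_left _ _⟩

theorem SwitchingEquiv.isGainLine_top {ι G : Type} [Group G] {s : G}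
    (hsc : ∀ g : G, s * g = g * s) {ζ : ι → ι → G} (h : SwitchingEquiv ⊤ ζ fun _ _ => s) :
    IsGainLine s ⊤ ζ := by
  obtain ⟨f, hf⟩ := h
  set φ := starGraphLineGraphIso ι
  refine ⟨_, _, φ, fun _ e _ => (f (φ.symm e))⁻¹, fun p q _ _ _ hpq => ?_⟩
  have hs := hf ((top_adj _ _).mpr (φ.symm.injective.ne hpq))
  dsimp only at hs ⊢
  rw [inv_inv, hsc, hs]
  group

theorem completeGraph_gainLine_iff_general
    {G : Type} [Group G] (n : ℕ) (hn : 3 < n)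
    (s : G) (hsc : ∀ g : G, s * g = g * s)
    (ζ : Fin n → Fin n → G) :
    IsGainLine s (⊤ : SimpleGraph (Fin n)) ζ ↔
      SwitchingEquiv (⊤ : SimpleGraph (Fin n)) ζ (fun _ _ => s) :=
  ⟨IsGainLine.switchingEquiv_top hsc (by simpa using hn), SwitchingEquiv.isGainLine_top hsc⟩

/-- `(K_n, ζ)`, `n > 3`, is a gain-line graph if and only if `ζ ∼ 𝐬` (Remark 2.14 and
part of Eq. (3.3)). -/
theorem completeGraph_gainLine_iff
    {G : Type} [Group G] (n : ℕ) (hn : 3 < n)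
    (s : G) (hs : s * s = 1) (hsc : ∀ g : G, s * g = g * s)
    (ζ : Fin n → Fin n → G) (hζ : IsGainFun (⊤ : SimpleGraph (Fin n)) ζ) :
    IsGainLine s (⊤ : SimpleGraph (Fin n)) ζ ↔
      SwitchingEquiv (⊤ : SimpleGraph (Fin n)) ζ (fun _ _ => s) :=
  completeGraph_gainLine_iff_general n hn s hsc ζ
end

section
/- Let G be a nontrivial group and fix a central involution s of G. A finite connected simple graph L with at least one edge has the property that (L,ζ) is a gain-line graph for every gain function ζ ∈ G(L) if and only if L is isomorphic to a path graph or to a cycle graph. -/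
/-!
Under `Ψ_L`, three distinct edges of `Γ` through a common vertex span a triangle of `L(Γ)` with
gain `s³ = s`, because `s` is a central involution. If a vertex `v` of `L` had three neighbours
`a`, `b`, `c`, then the edges `a`, `b`, `c` of `Γ` all meet the edge `v`, so two of them meet it at
the same endpoint, and some triangle `v x y` with `x, y ∈ {a, b, c}` would have gain `s`. The gain
function that is `t ≠ s` on `ab`, `ac`, `bc` and `1` on the edges at `v` rules this out. Hence `L`
has maximum degree at most two, and a finite connected graph of maximum degree at most two is a
path or a cycle: a longest path contains every vertex, and the only edge it can miss joins its ends.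

Conversely, `P_n ≅ L(P_{n+1})` and `C_n ≅ L(C_n)`, and in a graph of maximum degree two every vertex
`w` lies on at most two edges. Giving one of them, `e`, phase `1` at `w` and the other, `f`, the
phase `s · ζ(e, f)` realizes any gain function `ζ`.
-/

open SimpleGraph

lemma Fin.add_one_add_one_ne {n : ℕ} (i : Fin (n + 3)) : i + 1 + 1 ≠ i := by
  rw [add_assoc, Ne, add_eq_left, Fin.ext_iff, Fin.val_add, Fin.val_one, Fin.val_zero,
    Nat.mod_eq_of_lt (by omega)]
  omega

namespace SimpleGraph

variable {V W : Type*}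

def DegreeLeTwo (G : SimpleGraph V) : Prop :=
  ∀ ⦃v a b c : V⦄, G.Adj v a → G.Adj v b → G.Adj v c → a = b ∨ a = c ∨ b = c

lemma DegreeLeTwo.comap {G : SimpleGraph W} (hG : G.DegreeLeTwo) {f : V → W}
    (hf : Function.Injective f) : (G.comap f).DegreeLeTwo := by
  intro v a b c ha hb hc
  simpa only [hf.eq_iff] using hG ha hb hc

lemma degreeLeTwo_pathGraph (n : ℕ) : (pathGraph n).DegreeLeTwo := by
  intro v a b c ha hb hc
  simp only [pathGraph_adj, Fin.ext_iff] at *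
  omega

lemma degreeLeTwo_cycleGraph (n : ℕ) : (cycleGraph n).DegreeLeTwo := by
  rcases n with _ | _ | n
  · exact fun v => v.elim0
  · exact fun _ _ _ _ h => (cycleGraph_one_adj h).elim
  · intro v a b c ha hb hc
    have : ∀ x, (cycleGraph (n + 2)).Adj v x → x = v - 1 ∨ x = v + 1 := fun x hx => by
      simpa [cycleGraph_neighborSet] using (show x ∈ (cycleGraph (n + 2)).neighborSet v from hx)
    rcases this a ha with rfl | rfl <;> rcases this b hb with rfl | rfl <;>
      rcases this c hc with rfl | rfl <;> simp

lemma DegreeLeTwo.eq_or_eq_or_eq_of_mem {G : SimpleGraph V} (hG : G.DegreeLeTwo) {w : V}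
    {p q r : G.edgeSet} (hp : w ∈ (p : Sym2 V)) (hq : w ∈ (q : Sym2 V))
    (hr : w ∈ (r : Sym2 V)) : p = q ∨ p = r ∨ q = r := by
  have adj_other : ∀ {e : G.edgeSet} (he : w ∈ (e : Sym2 V)), G.Adj w (Sym2.Mem.other he) :=
    fun {e} he => by rw [← mem_edgeSet, Sym2.other_spec he]; exact e.2
  have ext_other : ∀ {e f : G.edgeSet} (he : w ∈ (e : Sym2 V)) (hf : w ∈ (f : Sym2 V)),
      Sym2.Mem.other he = Sym2.Mem.other hf → e = f :=
    fun he hf h => Subtype.ext <| by rw [← Sym2.other_spec he, ← Sym2.other_spec hf, h]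
  rcases hG (adj_other hp) (adj_other hq) (adj_other hr) with h | h | h
  · exact .inl (ext_other hp hq h)
  · exact .inr (.inl (ext_other hp hr h))
  · exact .inr (.inr (ext_other hq hr h))

lemma _root_.Sym2.exists_mem_and_mem_of_three {e x y z : Sym2 V} (hx : ∃ w, w ∈ e ∧ w ∈ x)
    (hy : ∃ w, w ∈ e ∧ w ∈ y) (hz : ∃ w, w ∈ e ∧ w ∈ z) :
    ∃ w ∈ e, w ∈ x ∧ w ∈ y ∨ w ∈ x ∧ w ∈ z ∨ w ∈ y ∧ w ∈ z := by
  induction e using Sym2.ind with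
  | _ u v =>
    obtain ⟨wx, hwx, hx⟩ := hx
    obtain ⟨wy, hwy, hy⟩ := hy
    obtain ⟨wz, hwz, hz⟩ := hz
    rw [Sym2.mem_iff] at hwx hwy hwz
    rcases hwx with rfl | rfl <;> rcases hwy with rfl | rfl <;> rcases hwz with rfl | rfl <;>
      simp_all

noncomputable def isoLineGraphOfBijective {A : SimpleGraph V} {Γ : SimpleGraph W}
    (f : V → Γ.edgeSet) (hf : Function.Bijective f)
    (hadj : ∀ i j, A.Adj i j ↔ i ≠ j ∧ ∃ w, w ∈ (f i : Sym2 W) ∧ w ∈ (f j : Sym2 W)) :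
    A ≃g Γ.lineGraph where
  toEquiv := Equiv.ofBijective f hf
  map_rel_iff' {i j} := by
    rw [Equiv.ofBijective_apply, Equiv.ofBijective_apply, lineGraph_adj_iff_exists, hadj,
      hf.injective.ne_iff]

noncomputable def pathGraphIsoLineGraph (n : ℕ) : pathGraph n ≃g (pathGraph (n + 1)).lineGraph :=
  isoLineGraphOfBijective
    (fun i => ⟨s(i.castSucc, i.succ), by simp [pathGraph_adj]⟩)
    (by
      constructor
      · intro i j h
        simp only [Subtype.mk.injEq, Sym2.eq_iff, Fin.ext_iff, Fin.val_castSucc, Fin.val_succ] at h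
        ext; omega
      · rintro ⟨e, he⟩
        induction e using Sym2.ind with
        | _ u v =>
          rw [mem_edgeSet, pathGraph_adj] at he
          rcases he with h | h
          · exact ⟨⟨u, by omega⟩, by simp [h]⟩
          · exact ⟨⟨v, by omega⟩, by simp [Sym2.eq_swap, h]⟩)
    (fun i j => by
      simp only [pathGraph_adj, ne_eq, Sym2.mem_iff, Fin.ext_iff, Fin.val_castSucc, Fin.val_succ]
      constructor
      · rintro (h | h)
        · exact ⟨by omega, j.castSucc, by simp [h]⟩
        · exact ⟨by omega, i.castSucc, by simp [h]⟩
      · rintro ⟨hne, w, hi, hj⟩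
        omega)

lemma cycleGraph_adj_iff_val {n : ℕ} (hn : 2 ≤ n) {i j : Fin n} :
    (cycleGraph n).Adj i j ↔ i.val + 1 = j.val ∨ j.val + 1 = i.val ∨
      i.val = 0 ∧ j.val + 1 = n ∨ j.val = 0 ∧ i.val + 1 = n := by
  rw [cycleGraph_adj']
  have := i.isLt
  have := j.isLt
  rcases lt_trichotomy i j with h | rfl | h
  · rw [Fin.coe_sub_iff_lt.mpr h, Fin.coe_sub_iff_le.mpr h.le, Fin.lt_def] at *
    omega
  · rw [Fin.coe_sub_iff_le.mpr le_rfl]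
    omega
  · rw [Fin.coe_sub_iff_le.mpr h.le, Fin.coe_sub_iff_lt.mpr h, Fin.lt_def] at *
    omega

noncomputable def cycleGraphIsoLineGraph (n : ℕ) :
    cycleGraph (n + 3) ≃g (cycleGraph (n + 3)).lineGraph :=
  have adj_iff : ∀ i j : Fin (n + 3), (cycleGraph (n + 3)).Adj i j ↔ i = j + 1 ∨ j = i + 1 :=
    fun i j => by rw [cycleGraph_adj, sub_eq_iff_eq_add, sub_eq_iff_eq_add, add_comm 1 j,
      add_comm 1 i]
  isoLineGraphOfBijective (fun i => ⟨s(i, i + 1), by simp [adj_iff]⟩)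
    (by
      constructor
      · intro i j h
        simp only [Subtype.mk.injEq, Sym2.eq_iff] at h
        rcases h with ⟨h, -⟩ | ⟨rfl, h⟩
        · exact h
        · exact absurd h (Fin.add_one_add_one_ne j)
      · rintro ⟨e, he⟩
        induction e using Sym2.ind with
        | _ u v =>
          rcases (adj_iff u v).mp he with rfl | rfl
          · exact ⟨v, by simp [Sym2.eq_swap]⟩
          · exact ⟨u, rfl⟩)
    (fun i j => by
      simp only [adj_iff, ne_eq, Sym2.mem_iff]
      constructor
      · rintro (rfl | rfl)
        · exact ⟨by simp, j + 1, by simp⟩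
        · exact ⟨by simp, i + 1, by simp⟩
      · rintro ⟨hne, w, rfl | rfl, h | h⟩
        · exact absurd h hne
        · exact .inl h
        · exact .inr h.symm
        · exact absurd (add_right_cancel h) hne)

section PathSubgraph

variable {n : ℕ} {A : SimpleGraph (Fin n)}

lemma DegreeLeTwo.adj_val_of_interior (hA : A.DegreeLeTwo) (hP : pathGraph n ≤ A) {k j : Fin n}
    (hk : 0 < k.val) (hkn : k.val + 1 < n) (h : A.Adj k j) :
    j.val + 1 = k.val ∨ k.val + 1 = j.val := by
  have hprev : A.Adj k ⟨k.val - 1, by omega⟩ := hP (by simp [pathGraph_adj]; omega)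
  have hnext : A.Adj k ⟨k.val + 1, hkn⟩ := hP (by simp [pathGraph_adj])
  have := hA hprev hnext h
  simp only [Fin.ext_iff] at this
  omega

lemma DegreeLeTwo.eq_ends_of_adj_of_not_pathGraph_adj (hA : A.DegreeLeTwo) (hP : pathGraph n ≤ A)
    {i j : Fin n} (h : A.Adj i j) (hij : ¬(pathGraph n).Adj i j) :
    3 ≤ n ∧ (i.val = 0 ∧ j.val + 1 = n ∨ j.val = 0 ∧ i.val + 1 = n) := by
  have hi := i.isLt
  have hj := j.isLt
  rw [pathGraph_adj] at hij
  have hne : i.val ≠ j.val := fun he => h.ne (Fin.ext he)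
  have endpoint : ∀ {k l : Fin n}, A.Adj k l → k.val + 1 ≠ l.val → l.val + 1 ≠ k.val →
      k.val = 0 ∨ k.val + 1 = n := fun {k l} hkl h₁ h₂ => by
    by_contra! hk
    have := hA.adj_val_of_interior hP (by omega) (by have := k.isLt; omega) hkl
    omega
  have := endpoint h (by omega) (by omega)
  have := endpoint h.symm (by omega) (by omega)
  omega

lemma DegreeLeTwo.eq_pathGraph_or_cycleGraph (hA : A.DegreeLeTwo) (hP : pathGraph n ≤ A) :
    A = pathGraph n ∨ 3 ≤ n ∧ A = cycleGraph n := by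
  by_cases hAP : ∀ i j, A.Adj i j → (pathGraph n).Adj i j
  · exact .inl (le_antisymm hAP hP)
  push Not at hAP
  obtain ⟨i, j, h, hij⟩ := hAP
  obtain ⟨hn, hwrap⟩ := hA.eq_ends_of_adj_of_not_pathGraph_adj hP h hij
  refine .inr ⟨hn, ?_⟩
  ext u v
  rw [cycleGraph_adj_iff_val (by omega)]
  constructor
  · intro huv
    by_cases hp : (pathGraph n).Adj u v
    · rw [pathGraph_adj] at hp
      omega
    · have := (hA.eq_ends_of_adj_of_not_pathGraph_adj hP huv hp).2
      omega
  · have wrap : ∀ x y : Fin n, x.val = 0 → y.val + 1 = n → A.Adj x y := fun x y hx hy => by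
      rcases hwrap with ⟨hi, hj⟩ | ⟨hj, hi⟩
      · rwa [show x = i by ext; omega, show y = j by ext; omega]
      · rw [show x = j by ext; omega, show y = i by ext; omega]
        exact h.symm
    rintro (huv | huv | ⟨hu, hv⟩ | ⟨hv, hu⟩)
    · exact hP (pathGraph_adj.mpr (.inl huv))
    · exact hP (pathGraph_adj.mpr (.inr huv))
    · exact wrap u v hu hv
    · exact (wrap v u hv hu).symm

end PathSubgraph

lemma exists_nodup_isChain_forall_length_le [Finite V] (G : SimpleGraph V) :
    ∃ l : List V, l.Nodup ∧ l.IsChain G.Adj ∧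
      ∀ l' : List V, l'.Nodup → l'.IsChain G.Adj → l'.length ≤ l.length := by
  have := Fintype.ofFinite V
  have hfin : {l : List V | l.Nodup ∧ l.IsChain G.Adj}.Finite :=
    (Set.finite_coe_iff.mp (inferInstance : Finite {l : List V // l.Nodup})).subset
      fun _ h => h.1
  obtain ⟨l, ⟨hnd, hch⟩, hmax⟩ := Set.exists_max_image _ List.length hfin ⟨[], by simp⟩
  exact ⟨l, hnd, hch, fun l' h₁ h₂ => hmax l' ⟨h₁, h₂⟩⟩

lemma DegreeLeTwo.mem_of_adj_of_forall_length_le {G : SimpleGraph V} (hG : G.DegreeLeTwo)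
    {l : List V} (hnd : l.Nodup) (hch : l.IsChain G.Adj)
    (hmax : ∀ l' : List V, l'.Nodup → l'.IsChain G.Adj → l'.length ≤ l.length)
    {x y : V} (hx : x ∈ l) (hxy : G.Adj x y) : y ∈ l := by
  by_contra hy
  obtain ⟨l₁, l₂, rfl⟩ := List.append_of_mem hx
  rcases l₂ with _ | ⟨b, l₂⟩
  · have := hmax (l₁ ++ [x] ++ [y]) (hnd.append (List.nodup_singleton y) (by simpa using hy))
      (hch.append (List.isChain_singleton y) (by simpa using hxy))
    simp at this
  rcases l₁.eq_nil_or_concat with rfl | ⟨l₁, a, rfl⟩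
  · have := hmax (y :: x :: b :: l₂) (by simp_all) (List.isChain_cons_cons.mpr ⟨hxy.symm, hch⟩)
    simp at this
  · rw [List.concat_eq_append, List.append_assoc, List.singleton_append] at hch hnd hy
    have hch' := List.isChain_append_cons_cons.mp hch
    have hxa : G.Adj x a := hch'.2.1.symm
    have hxb : G.Adj x b := (List.isChain_cons_cons.mp hch'.2.2).1
    rcases hG hxa hxb hxy with rfl | rfl | rfl <;> simp_all [List.nodup_append]

lemma Reachable.mem_of_forall_adj {G : SimpleGraph V} {s : Set V}
    (hs : ∀ ⦃x y⦄, G.Adj x y → x ∈ s → y ∈ s) {u v : V} (h : G.Reachable u v) (hu : u ∈ s) :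
    v ∈ s := by
  obtain ⟨p⟩ := h
  induction p with
  | nil => exact hu
  | cons hxy _ ih => exact ih (hs hxy hu)

theorem Connected.exists_iso_pathGraph_or_cycleGraph [Finite V] {G : SimpleGraph V}
    (hconn : G.Connected) (hG : G.DegreeLeTwo) :
    (∃ n, Nonempty (G ≃g pathGraph n)) ∨ ∃ n, 3 ≤ n ∧ Nonempty (G ≃g cycleGraph n) := by
  obtain ⟨l, hnd, hch, hmax⟩ := exists_nodup_isChain_forall_length_le G
  obtain ⟨x₀⟩ := hconn.nonempty
  obtain ⟨x, hx⟩ : ∃ x, x ∈ l := l.exists_mem_of_ne_nil <| by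
    rintro rfl
    simpa using hmax [x₀] (List.nodup_singleton x₀) (List.isChain_singleton x₀)
  have hall : ∀ z, z ∈ l := fun z => (hconn.preconnected x z).mem_of_forall_adj
    (fun _ _ hxy hx => hG.mem_of_adj_of_forall_length_le hnd hch hmax hx hxy) hx
  classical
  let e := List.Nodup.getEquivOfForallMemList l hnd hall
  have hP : pathGraph l.length ≤ G.comap e := fun i j hij => by
    rcases pathGraph_adj.mp hij with h | h
    · simpa [e, ← h] using hch.getElem i (by omega)
    · simpa [e, ← h] using (hch.getElem j (by omega)).symm
  rcases (hG.comap e.injective).eq_pathGraph_or_cycleGraph hP with h | ⟨hn, h⟩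
  · exact .inl ⟨l.length, ⟨h ▸ (Iso.comap e G).symm⟩⟩
  · exact .inr ⟨l.length, hn, ⟨h ▸ (Iso.comap e G).symm⟩⟩

end SimpleGraph

section Gain

variable {V G : Type} [Group G] {s : G}

lemma isGainFun_ite_of_asymm (Γ : SimpleGraph V) (R : V → V → Prop) [DecidableRel R]
    (hR : ∀ u v, R u v → ¬R v u) (t : G) :
    IsGainFun Γ fun u v => if R u v then t else if R v u then t⁻¹ else 1 := by
  intro u v _
  by_cases huv : R u v
  · simp [huv, hR u v huv]
  · by_cases hvu : R v u <;> simp [huv, hvu]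

lemma PsiLEq.triangle_gain {Γ : SimpleGraph V} {H : GPhase Γ G}
    {ζ : Γ.edgeSet → Γ.edgeSet → G} (hH : PsiLEq s H ζ) (hs : s * s = 1)
    (hsc : ∀ g, Commute s g) {p q r : Γ.edgeSet} {w : V} (hp : w ∈ (p : Sym2 V))
    (hq : w ∈ (q : Sym2 V)) (hr : w ∈ (r : Sym2 V)) (hpq : p ≠ q) (hqr : q ≠ r) (hrp : r ≠ p) :
    ζ p q * ζ q r * ζ r p = s := by
  have hmove : ∀ x y : G, x * (s * y) = s * (x * y) := fun x y => ((hsc x).left_comm y).symm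
  have hss : ∀ x : G, s * (s * x) = x := fun x => by rw [← mul_assoc, hs, one_mul]
  rw [hH p q w hp hq hpq, hH q r w hq hr hqr, hH r p w hr hp hrp]
  simp only [mul_assoc, hmove, mul_inv_cancel_left, inv_mul_cancel, mul_one, hss]

lemma SimpleGraph.DegreeLeTwo.exists_psiLEq (hs : s * s = 1) (hsc : ∀ g, Commute s g)
    {Γ : SimpleGraph V} (hΓ : Γ.DegreeLeTwo) {ζ : Γ.edgeSet → Γ.edgeSet → G}
    (hζ : IsGainFun Γ.lineGraph ζ) : ∃ H : GPhase Γ G, PsiLEq s H ζ := by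
  classical
  refine ⟨fun w e he =>
    let f := (⟨e, he⟩ : ∃ f : Γ.edgeSet, w ∈ (f : Sym2 V)).choose
    if e = f then 1 else s * ζ f e, ?_⟩
  intro p q w hp hq hpq
  have hex : ∃ f : Γ.edgeSet, w ∈ (f : Sym2 V) := ⟨p, hp⟩
  obtain ⟨f, hf, hf_def⟩ : ∃ f : Γ.edgeSet, w ∈ (f : Sym2 V) ∧ hex.choose = f :=
    ⟨_, hex.choose_spec, rfl⟩
  -- `Exists.choose` only sees the proposition, so `p` and `q` get the same reference edge at `w`.
  change ζ p q = s * (if p = hex.choose then 1 else s * ζ hex.choose p)⁻¹ *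
    (if q = hex.choose then 1 else s * ζ hex.choose q)
  rw [hf_def]
  rcases hΓ.eq_or_eq_or_eq_of_mem hp hq hf with h | rfl | rfl
  · exact absurd h hpq
  · rw [if_pos rfl, if_neg hpq.symm, inv_one, mul_one, ← mul_assoc, hs, one_mul]
  · have hqp : ζ q p = (ζ p q)⁻¹ := hζ (lineGraph_adj_iff_exists.mpr ⟨hpq, w, hp, hq⟩)
    rw [if_neg hpq, if_pos rfl, mul_one, hqp, mul_inv_rev, inv_inv, ← mul_assoc,
      (hsc _).eq, mul_assoc, mul_inv_cancel, mul_one]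

lemma isGainLine_of_iso_lineGraph (hs : s * s = 1) (hsc : ∀ g, Commute s g) {VL : Type}
    {L : SimpleGraph VL} {Γ : SimpleGraph V} (hΓ : Γ.DegreeLeTwo) (φ : L ≃g Γ.lineGraph)
    {ζ : VL → VL → G} (hζ : IsGainFun L ζ) : IsGainLine s L ζ :=
  ⟨V, Γ, φ, hΓ.exists_psiLEq hs hsc fun _ _ h => hζ (φ.symm.map_rel_iff.mpr h)⟩

theorem degreeLeTwo_of_forall_isGainLine [Nontrivial G] (hs : s * s = 1)
    (hsc : ∀ g, Commute s g) {VL : Type} {L : SimpleGraph VL}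
    (h : ∀ ζ : VL → VL → G, IsGainFun L ζ → IsGainLine s L ζ) : L.DegreeLeTwo := by
  classical
  intro v a b c ha hb hc
  by_contra! hne
  obtain ⟨t, ht⟩ := exists_ne s
  let R : VL → VL → Prop := fun x y => x = a ∧ (y = b ∨ y = c) ∨ x = b ∧ y = c
  have hR : ∀ x y, R x y → ¬R y x := by grind
  have hRv : ∀ x, ¬R x v ∧ ¬R v x := by grind [ha.ne, hb.ne, hc.ne]
  obtain ⟨W, Γ, φ, H, hH⟩ := h _ (isGainFun_ite_of_asymm L R hR t)
  have no_triangle : ∀ x y, R x y → L.Adj v x → L.Adj v y →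
      ¬∃ w, w ∈ (φ v : Sym2 W) ∧ w ∈ (φ x : Sym2 W) ∧ w ∈ (φ y : Sym2 W) := by
    rintro x y hxy hx hy ⟨w, hwv, hwx, hwy⟩
    have := hH.triangle_gain hs hsc hwx hwy hwv
      (φ.injective.ne fun hxy' => hR x y hxy (hxy' ▸ hxy)) (φ.injective.ne hy.ne')
      (φ.injective.ne hx.ne)
    simp only [RelIso.symm_apply_apply, if_pos hxy, (hRv x).1, (hRv x).2, (hRv y).1,
      (hRv y).2, if_false, mul_one] at this
    exact ht this
  have meets : ∀ x, L.Adj v x → ∃ w, w ∈ (φ v : Sym2 W) ∧ w ∈ (φ x : Sym2 W) :=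
    fun x hx => (lineGraph_adj_iff_exists.mp (φ.map_rel_iff.mpr hx)).2
  obtain ⟨w, hwv, hw | hw | hw⟩ := Sym2.exists_mem_and_mem_of_three (meets a ha) (meets b hb)
    (meets c hc)
  · exact no_triangle a b (by simp [R]) ha hb ⟨w, hwv, hw⟩
  · exact no_triangle a c (by simp [R]) ha hc ⟨w, hwv, hw⟩
  · exact no_triangle b c (by simp [R]) hb hc ⟨w, hwv, hw⟩

end Gain

theorem forall_gainLine_iff_path_or_cycle_general
    {VL G : Type} [Group G] [Nontrivial G] [Fintype VL] (L : SimpleGraph VL)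
    (hconn : L.Connected)
    (s : G) (hs : s * s = 1) (hsc : ∀ g : G, s * g = g * s) :
    (∀ ζ : VL → VL → G, IsGainFun L ζ → IsGainLine s L ζ) ↔
      ((∃ n : ℕ, Nonempty (L ≃g SimpleGraph.pathGraph n)) ∨
        ∃ n : ℕ, 3 ≤ n ∧ Nonempty (L ≃g SimpleGraph.cycleGraph n)) := by
  constructor
  · exact fun h => hconn.exists_iso_pathGraph_or_cycleGraph
      (degreeLeTwo_of_forall_isGainLine hs hsc h)
  · rintro (⟨n, ⟨φ⟩⟩ | ⟨n, hn, ⟨φ⟩⟩) ζ hζ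
    · exact isGainLine_of_iso_lineGraph hs hsc (degreeLeTwo_pathGraph (n + 1))
        (φ.trans (pathGraphIsoLineGraph n)) hζ
    · obtain ⟨m, rfl⟩ := Nat.exists_eq_add_of_le' hn
      exact isGainLine_of_iso_lineGraph hs hsc (degreeLeTwo_cycleGraph (m + 3))
        (φ.trans (cycleGraphIsoLineGraph m)) hζ

/-- **Corollary 3.6.** For a nontrivial group `G`, a connected graph `L` is such that
`(L, ζ)` is a gain-line graph for every gain function `ζ ∈ G(L)` if and only if `L` is
a path or a cycle. -/
theorem forall_gainLine_iff_path_or_cycle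
    {VL G : Type} [Group G] [Nontrivial G] [Fintype VL] (L : SimpleGraph VL)
    (hconn : L.Connected) (hE : L.edgeSet.Nonempty)
    (s : G) (hs : s * s = 1) (hsc : ∀ g : G, s * g = g * s) :
    (∀ ζ : VL → VL → G, IsGainFun L ζ → IsGainLine s L ζ) ↔
      ((∃ n : ℕ, Nonempty (L ≃g SimpleGraph.pathGraph n)) ∨
        ∃ n : ℕ, 3 ≤ n ∧ Nonempty (L ≃g SimpleGraph.cycleGraph n)) :=
  forall_gainLine_iff_path_or_cycle_general L hconn s hs hsc
end

section
/- Let L be a finite connected simple graph that is the line graph of some simple graph, and suppose every eigenvalue of the adjacency matrix of L has absolute value at most 2 (i.e., the spectral radius of L is at most 2). Then L is isomorphic to a cycle graph or to a path graph. -/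
/-!
A line graph is claw-free: of three edges meeting a common edge `xy`, two meet it at the same
endpoint. The bound on the spectrum gives `xᵀAx ≤ 2 xᵀx` for every real vector `x`, which rules
out the paw (a triangle with a pendant edge), whose spectral radius exceeds `2`. A claw-free
paw-free graph has maximum degree at most `2`, and a connected graph of maximum degree at most `2`
is a path or a cycle: a longest path has all the neighbours of its vertices on it, so it is
Hamiltonian, and the only possible edge off it joins its two ends.
-/

open SimpleGraph

open Matrix in
theorem Matrix.IsHermitian.dotProduct_mulVec_le_of_spectrum_le {n : Type*} [Fintype n]
    [DecidableEq n] {A : Matrix n n ℝ} (hA : A.IsHermitian) {c : ℝ}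
    (hc : ∀ μ ∈ spectrum ℝ A, μ ≤ c) (x : n → ℝ) : x ⬝ᵥ A *ᵥ x ≤ c * (x ⬝ᵥ x) := by
  have hpsd : (algebraMap ℝ (Matrix n n ℝ) c - A).PosSemidef := by
    refine posSemidef_iff_isHermitian_and_spectrum_nonneg.mpr ⟨?_, ?_⟩
    · exact (IsSelfAdjoint.algebraMap _ (.all c)).sub hA
    · rw [← spectrum.singleton_sub_eq]
      rintro _ ⟨_, rfl, μ, hμ, rfl⟩
      exact sub_nonneg.mpr (hc μ hμ)
  have := hpsd.dotProduct_mulVec_nonneg x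
  simp only [star_trivial, Algebra.algebraMap_eq_smul_one, sub_mulVec, smul_mulVec,
    one_mulVec, dotProduct_sub, dotProduct_smul, smul_eq_mul] at this
  linarith

namespace SimpleGraph

open Matrix

variable {V : Type*} {G : SimpleGraph V}

def IsClawFree (G : SimpleGraph V) : Prop :=
  ∀ ⦃v a b c : V⦄, G.Adj v a → G.Adj v b → G.Adj v c → a ≠ b → a ≠ c → b ≠ c →
    G.Adj a b ∨ G.Adj a c ∨ G.Adj b c

theorem IsClawFree.comap {W : Type*} {H : SimpleGraph W} (f : G ↪g H)
    (hH : H.IsClawFree) : G.IsClawFree := by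
  intro v a b c ha hb hc hab hac hbc
  simpa only [f.map_adj_iff] using hH (f.map_adj_iff.mpr ha) (f.map_adj_iff.mpr hb)
    (f.map_adj_iff.mpr hc) (f.injective.ne hab) (f.injective.ne hac) (f.injective.ne hbc)

theorem isClawFree_lineGraph (G : SimpleGraph V) : G.lineGraph.IsClawFree := by
  rintro ⟨e, he⟩ f g h hf hg hh hfg hfh hgh
  induction e using Sym2.ind with | _ x y => ?_
  have adj_of_mem {w : V} {f g : G.edgeSet} (hfg : f ≠ g) (hf : w ∈ (f : Sym2 V))
      (hg : w ∈ (g : Sym2 V)) : G.lineGraph.Adj f g :=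
    lineGraph_adj_iff_exists.mpr ⟨hfg, w, hf, hg⟩
  obtain ⟨-, wf, hwf, hwf'⟩ := lineGraph_adj_iff_exists.mp hf
  obtain ⟨-, wg, hwg, hwg'⟩ := lineGraph_adj_iff_exists.mp hg
  obtain ⟨-, wh, hwh, hwh'⟩ := lineGraph_adj_iff_exists.mp hh
  simp only [Sym2.mem_iff] at hwf hwg hwh
  rcases hwf with rfl | rfl <;> rcases hwg with rfl | rfl <;> rcases hwh with rfl | rfl <;>
    first
    | exact .inl (adj_of_mem hfg ‹_› ‹_›)
    | exact .inr (.inl (adj_of_mem hfh ‹_› ‹_›))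
    | exact .inr (.inr (adj_of_mem hgh ‹_› ‹_›))

theorem exists_two_mul_dotProduct_lt_of_paw [Fintype V] [DecidableEq V] (G : SimpleGraph V)
    [DecidableRel G.Adj] {v a b c : V} (hva : G.Adj v a) (hvb : G.Adj v b) (hvc : G.Adj v c)
    (hab : G.Adj a b) (hac : a ≠ c) (hbc : b ≠ c) :
    ∃ x : V → ℝ, 2 * (x ⬝ᵥ x) < x ⬝ᵥ G.adjMatrix ℝ *ᵥ x := by
  -- The paw has spectral radius about `2.17`; on `(v, a, b, c)` this vector gives `38 > 2 * 18`.
  refine ⟨Pi.single v 3 + Pi.single a 2 + Pi.single b 2 + Pi.single c 1, ?_⟩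
  have := hva.ne; have := hvb.ne; have := hvc.ne; have := hab.ne
  by_cases G.Adj a c <;> by_cases G.Adj b c <;>
    norm_num [mulVec_add, add_dotProduct, dotProduct_add, *, Ne.symm, G.adj_comm]

theorem degree_le_two_of_isClawFree [Fintype V] [DecidableEq V] [DecidableRel G.Adj]
    (hG : G.IsClawFree)
    (hq : ∀ x : V → ℝ, x ⬝ᵥ G.adjMatrix ℝ *ᵥ x ≤ 2 * (x ⬝ᵥ x)) (v : V) : G.degree v ≤ 2 := by
  by_contra! hdeg
  obtain ⟨a, ha, b, hb, c, hc, hab, hac, hbc⟩ := Finset.two_lt_card.mp hdeg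
  rw [mem_neighborFinset] at ha hb hc
  obtain ⟨x, hx⟩ : ∃ x : V → ℝ, 2 * (x ⬝ᵥ x) < x ⬝ᵥ G.adjMatrix ℝ *ᵥ x := by
    rcases hG ha hb hc hab hac hbc with h | h | h
    · exact G.exists_two_mul_dotProduct_lt_of_paw ha hb hc h hac hbc
    · exact G.exists_two_mul_dotProduct_lt_of_paw ha hc hb h hab hbc.symm
    · exact G.exists_two_mul_dotProduct_lt_of_paw hb hc ha h hab.symm hac.symm
  exact (hq x).not_gt hx

theorem eq_or_eq_of_adj_of_degree_le_two {v a b c : V} [Fintype (G.neighborSet v)]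
    (hv : G.degree v ≤ 2) (ha : G.Adj v a) (hb : G.Adj v b) (hab : a ≠ b) (hc : G.Adj v c) :
    c = a ∨ c = b := by
  classical
  by_contra! hc'
  have : 2 < (G.neighborFinset v).card := Finset.two_lt_card.mpr
    ⟨a, by simpa, b, by simpa, c, by simpa, hab, hc'.1.symm, hc'.2.symm⟩
  rw [card_neighborFinset_eq_degree] at this
  omega

theorem Reachable.mem_of_forall_adj_mem {S : Set V} (hS : ∀ ⦃x y⦄, x ∈ S → G.Adj x y → y ∈ S)
    {u v : V} (h : G.Reachable u v) (hu : u ∈ S) : v ∈ S := by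
  obtain ⟨p⟩ := h
  induction p with
  | nil => exact hu
  | cons hadj _ ih => exact ih (hS hu hadj)

theorem exists_isPath_forall_length_le [Fintype V] [Nonempty V] (G : SimpleGraph V) :
    ∃ (u v : V) (p : G.Walk u v), p.IsPath ∧
      ∀ ⦃u' v' : V⦄ (q : G.Walk u' v'), q.IsPath → q.length ≤ p.length := by
  let lengths : Set ℕ := {m | ∃ (u v : V) (p : G.Walk u v), p.IsPath ∧ p.length = m}
  have hne : lengths.Nonempty := ⟨0, Classical.arbitrary V, _, .nil, .nil, rfl⟩
  have hbdd : BddAbove lengths := ⟨Fintype.card V, by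
    rintro _ ⟨u, v, p, hp, rfl⟩
    exact hp.length_lt.le⟩
  obtain ⟨u, v, p, hp, hlen⟩ := Nat.sSup_mem hne hbdd
  exact ⟨u, v, p, hp, fun u' v' q hq => hlen ▸ le_csSup hbdd ⟨u', v', q, hq, rfl⟩⟩

namespace Walk

variable {u v w : V} {p : G.Walk u v}

theorem IsPath.mem_support_of_adj_start (hp : p.IsPath)
    (hmax : ∀ ⦃u' v' : V⦄ (q : G.Walk u' v'), q.IsPath → q.length ≤ p.length)
    (h : G.Adj u w) : w ∈ p.support := by
  by_contra hw
  have := hmax _ ((cons_isPath_iff h.symm p).mpr ⟨hp, hw⟩)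
  simp at this

theorem IsPath.mem_support_of_adj_end (hp : p.IsPath)
    (hmax : ∀ ⦃u' v' : V⦄ (q : G.Walk u' v'), q.IsPath → q.length ≤ p.length)
    (h : G.Adj v w) : w ∈ p.support := by
  simpa using hp.reverse.mem_support_of_adj_start (by simpa using hmax) h

theorem IsPath.eq_or_eq_of_adj_getVert (hp : p.IsPath) {i : ℕ} (hi₀ : 0 < i) (hi : i < p.length)
    [Fintype (G.neighborSet (p.getVert i))] (hdeg : G.degree (p.getVert i) ≤ 2)
    (hw : G.Adj (p.getVert i) w) : w = p.getVert (i - 1) ∨ w = p.getVert (i + 1) := by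
  have hprev : G.Adj (p.getVert (i - 1)) (p.getVert i) := by
    simpa [Nat.sub_add_cancel hi₀] using p.adj_getVert_succ (i := i - 1) (by omega)
  have hne : p.getVert (i - 1) ≠ p.getVert (i + 1) := fun h => by
    have := hp.getVert_injOn (by simp; omega) (by simp; omega) h
    omega
  exact eq_or_eq_of_adj_of_degree_le_two hdeg hprev.symm (p.adj_getVert_succ hi) hne hw

theorem IsPath.mem_support_of_adj (hp : p.IsPath)
    (hmax : ∀ ⦃u' v' : V⦄ (q : G.Walk u' v'), q.IsPath → q.length ≤ p.length)
    [∀ x, Fintype (G.neighborSet x)] (hdeg : ∀ x, G.degree x ≤ 2) {x : V}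
    (hx : x ∈ p.support) (h : G.Adj x w) : w ∈ p.support := by
  obtain ⟨i, rfl, hi⟩ := mem_support_iff_exists_getVert.mp hx
  rcases Nat.eq_zero_or_pos i with rfl | hi₀
  · exact hp.mem_support_of_adj_start hmax (by simpa using h)
  rcases hi.eq_or_lt with rfl | hi
  · exact hp.mem_support_of_adj_end hmax (by simpa using h)
  rcases hp.eq_or_eq_of_adj_getVert hi₀ hi (hdeg _) h with rfl | rfl <;> exact getVert_mem_support _ _

theorem IsPath.eq_add_one_or_of_adj_getVert (hp : p.IsPath) [∀ x, Fintype (G.neighborSet x)]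
    (hdeg : ∀ x, G.degree x ≤ 2) {i j : ℕ} (hij : i < j) (hj : j ≤ p.length)
    (hadj : G.Adj (p.getVert i) (p.getVert j)) : j = i + 1 ∨ i = 0 ∧ j = p.length := by
  have hinj {k l : ℕ} (hk : k ≤ p.length) (hl : l ≤ p.length) (h : p.getVert k = p.getVert l) :
      k = l :=
    hp.getVert_injOn (by simpa using hk) (by simpa using hl) h
  rcases Nat.eq_zero_or_pos i with rfl | hi₀
  · rcases hj.eq_or_lt with rfl | hj
    · exact .inr ⟨rfl, rfl⟩
    rcases hp.eq_or_eq_of_adj_getVert hij hj (hdeg _) hadj.symm with h | h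
    · have := hinj (by omega) (by omega) h; omega
    · have := hinj (by omega) (by omega) h; omega
  · rcases hp.eq_or_eq_of_adj_getVert hi₀ (by omega) (hdeg _) hadj with h | h
    · have := hinj hj (by omega) h; omega
    · exact .inl (hinj hj (by omega) h)

end Walk

theorem cycleGraph_adj_iff {n : ℕ} {i j : Fin n} :
    (cycleGraph n).Adj i j ↔ (pathGraph n).Adj i j ∨
      3 ≤ n ∧ ((i : ℕ) = 0 ∧ (j : ℕ) = n - 1 ∨ (j : ℕ) = 0 ∧ (i : ℕ) = n - 1) := by
  have hmod : ∀ a < 2 * n, a % n = if a < n then a else a - n := fun a ha => by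
    split_ifs with h
    · exact Nat.mod_eq_of_lt h
    · rw [Nat.mod_eq_sub_mod (not_lt.mp h), Nat.mod_eq_of_lt (by omega)]
  obtain ⟨i, hi⟩ := i
  obtain ⟨j, hj⟩ := j
  simp only [cycleGraph_adj', pathGraph_adj, Fin.sub_def]
  rw [hmod _ (by omega), hmod _ (by omega)]
  split_ifs <;> omega

theorem eq_pathGraph_or_cycleGraph_of_le {n : ℕ} {H : SimpleGraph (Fin n)}
    (hpath : pathGraph n ≤ H) (hcycle : H ≤ cycleGraph n) :
    H = pathGraph n ∨ 3 ≤ n ∧ H = cycleGraph n := by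
  by_cases hend : ∃ i j : Fin n, H.Adj i j ∧ 3 ≤ n ∧ (i : ℕ) = 0 ∧ (j : ℕ) = n - 1
  · obtain ⟨i, j, hij, hn, hi, hj⟩ := hend
    refine .inr ⟨hn, le_antisymm hcycle fun a b hab => ?_⟩
    rcases cycleGraph_adj_iff.mp hab with hab | ⟨-, ⟨ha, hb⟩ | ⟨hb, ha⟩⟩
    · exact hpath hab
    · rwa [Fin.ext (ha.trans hi.symm), Fin.ext (hb.trans hj.symm)]
    · rw [Fin.ext (ha.trans hj.symm), Fin.ext (hb.trans hi.symm)]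
      exact hij.symm
  · refine .inl (le_antisymm (fun a b hab => ?_) hpath)
    refine (cycleGraph_adj_iff.mp (hcycle hab)).resolve_right ?_
    rintro ⟨hn, ⟨ha, hb⟩ | ⟨hb, ha⟩⟩
    · exact hend ⟨a, b, hab, hn, ha, hb⟩
    · exact hend ⟨b, a, hab.symm, hn, hb, ha⟩

theorem Connected.nonempty_iso_cycleGraph_or_pathGraph [Fintype V] [DecidableRel G.Adj]
    (hG : G.Connected) (hdeg : ∀ v, G.degree v ≤ 2) :
    (∃ n, 3 ≤ n ∧ Nonempty (G ≃g cycleGraph n)) ∨ ∃ n, Nonempty (G ≃g pathGraph n) := by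
  have := hG.nonempty
  obtain ⟨u, v, p, hp, hmax⟩ := G.exists_isPath_forall_length_le
  have hspan (x : V) : x ∈ p.support :=
    (hG.preconnected u x).mem_of_forall_adj_mem (S := {x | x ∈ p.support})
      (fun _ _ hx h => hp.mem_support_of_adj hmax hdeg hx h) p.start_mem_support
  let e : Fin (p.length + 1) ≃ V := Equiv.ofBijective (fun i => p.getVert i)
    ⟨fun i j h => Fin.ext (hp.getVert_injOn (by simpa using i.is_le) (by simpa using j.is_le) h),
      fun x => by
        obtain ⟨i, hi, hle⟩ := Walk.mem_support_iff_exists_getVert.mp (hspan x)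
        exact ⟨⟨i, by omega⟩, hi⟩⟩
  have he (i : Fin (p.length + 1)) : e i = p.getVert i := rfl
  have hpath : pathGraph _ ≤ G.comap e := by
    intro i j hij
    rw [comap_adj, he, he]
    rcases pathGraph_adj.mp hij with h | h
    · exact h ▸ p.adj_getVert_succ (by omega)
    · exact (h ▸ p.adj_getVert_succ (by omega)).symm
  have hcycle : G.comap e ≤ cycleGraph _ := by
    have (i j : Fin (p.length + 1)) (hij : i < j) (h : G.Adj (e i) (e j)) :
        (cycleGraph _).Adj i j := by
      have := hp.eq_add_one_or_of_adj_getVert hdeg hij (by omega) h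
      rw [cycleGraph_adj_iff, pathGraph_adj]
      omega
    intro i j hij
    rcases lt_trichotomy i j with h | rfl | h
    · exact this i j h hij
    · exact (hij.ne rfl).elim
    · exact (this j i h hij.symm).symm
  rcases eq_pathGraph_or_cycleGraph_of_le hpath hcycle with hH | ⟨hn, hH⟩
  · exact .inr ⟨_, ⟨hH ▸ (Iso.comap e G).symm⟩⟩
  · exact .inl ⟨_, hn, ⟨hH ▸ (Iso.comap e G).symm⟩⟩

end SimpleGraph

/-- **Corollary 4.4.** A connected line graph whose adjacency matrix has all of its
eigenvalues of absolute value at most `2` must be a cycle or a path. -/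
theorem lineGraph_spectralRadius_le_two
    {VL : Type} [Fintype VL] [DecidableEq VL] (L : SimpleGraph VL)
    [DecidableRel L.Adj] (hconn : L.Connected)
    (hline : ∃ (V' : Type) (Γ : SimpleGraph V'), Nonempty (L ≃g Γ.lineGraph))
    (hspec : ∀ μ ∈ spectrum ℝ (L.adjMatrix ℝ), |μ| ≤ 2) :
    (∃ n : ℕ, 3 ≤ n ∧ Nonempty (L ≃g SimpleGraph.cycleGraph n)) ∨
      ∃ n : ℕ, Nonempty (L ≃g SimpleGraph.pathGraph n) := by
  obtain ⟨V', Γ, ⟨φ⟩⟩ := hline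
  have hclaw : L.IsClawFree := Γ.isClawFree_lineGraph.comap φ.toEmbedding
  have hquad := (L.isHermitian_adjMatrix ℝ).dotProduct_mulVec_le_of_spectrum_le
    fun μ hμ => (abs_le.mp (hspec μ hμ)).2
  exact hconn.nonempty_iso_cycleGraph_or_pathGraph (degree_le_two_of_isClawFree hclaw hquad)
end
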